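/- arXiv:1803.09185 — 5 statements merged into one kernel-verified Lean document; each statement's English description precedes it below -/
import Mathlib

section
/- The map sending a composition λ = (λ_1, …, λ_m) of k with m parts to the vector (b_1 − b_2, …, b_{k−1} − b_k, b_k), where b_i = #{t ∈ {1,…,m−1} : λ_1 + ⋯ + λ_t ≥ i}, is a bijection from the set of compositions of k into m parts onto the set of vectors (a_1,…,a_k) of nonnegative integers with a_1 + ⋯ + a_k ≤ m − 1. -/
/-!
Write `S t = λ_1 + ⋯ + λ_t`, a monotone path from `S 0 = 0` to `S m = k`. For `1 ≤ t ≤ m - 1`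
the count `b_i` satisfies `m - t ≤ b_i ↔ i ≤ S t`, so `b` is the conjugate of `S`: both record
the same staircase in an `(m - 1) × k` box, read by columns instead of rows. Conjugating back,
`S t = #{i : m - t ≤ b_i}`. Since `b_{k+1} = 0`, the `b_i` are the tail sums of `λ̈`, and
`b_1 ≤ m - 1` is the constraint on `∑ λ̈`. Hence `a ↦ (tail sums of a) ↦ conjugate ↦ differences`
inverts `λ ↦ λ̈`.
-/

/-- `b_i` for a composition `lam` of `k` into `m` parts:
the number of `t ∈ {1,…,m−1}` with `lam_1 + ⋯ + lam_t ≥ i` (here `i` is 1-based,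
represented by `i : Fin k` standing for `i+1`). -/
noncomputable def slimB (m k : ℕ) (lam : Fin m → ℕ) (i : Fin k) : ℕ :=
  ((Finset.Icc 1 (m - 1)).filter
    (fun t => (i : ℕ) + 1 ≤ ∑ j ∈ Finset.range t, (if h : j < m then lam ⟨j, h⟩ else 0))).card

/-- The map `λ ↦ λ̈ = (b_1 − b_2, …, b_{k−1} − b_k, b_k)`. -/
noncomputable def slimDdot (m k : ℕ) (lam : Fin m → ℕ) : Fin k → ℕ :=
  fun i => slimB m k lam i -
    (if h : (i : ℕ) + 1 < k then slimB m k lam ⟨(i : ℕ) + 1, h⟩ else 0)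

open Finset

namespace Slim

lemma le_card_filter_Icc_iff {P : ℕ → Prop} [DecidablePred P] (hP : Monotone P) {a b t : ℕ}
    (hat : a ≤ t) (htb : t ≤ b) : b + 1 - t ≤ #{s ∈ Icc a b | P s} ↔ P t := by
  constructor
  · intro h
    by_contra ht
    have hsub : {s ∈ Icc a b | P s} ⊆ Icc (t + 1) b := fun s hs => by
      rw [mem_filter, mem_Icc] at hs
      exact mem_Icc.2 ⟨not_le.1 fun hst => ht (hP hst hs.2), hs.1.2⟩
    have := card_le_card hsub
    rw [Nat.card_Icc] at this
    omega
  · intro ht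
    have hsub : Icc t b ⊆ {s ∈ Icc a b | P s} := fun s hs => by
      rw [mem_Icc] at hs
      exact mem_filter.2 ⟨mem_Icc.2 ⟨hat.trans hs.1, hs.2⟩, hP hs.1 ht⟩
    exact Nat.card_Icc t b ▸ card_le_card hsub

lemma lt_card_filter_range_iff {P : ℕ → Prop} [DecidablePred P] (hP : Antitone P) {n i : ℕ}
    (hi : i < n) : i < #{j ∈ range n | P j} ↔ P i := by
  constructor
  · intro h
    by_contra hPi
    have hsub : {j ∈ range n | P j} ⊆ range i := fun j hj =>
      mem_range.2 (not_le.1 fun hij => hPi (hP hij (mem_filter.1 hj).2))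
    have := card_le_card hsub
    rw [card_range] at this
    omega
  · intro hPi
    have hsub : range (i + 1) ⊆ {j ∈ range n | P j} := fun j hj => by
      rw [mem_range] at hj
      exact mem_filter.2 ⟨mem_range.2 (by omega), hP (Nat.lt_succ_iff.1 hj) hPi⟩
    have := card_le_card hsub
    rwa [card_range] at this

lemma card_filter_Icc_sub_le {m c : ℕ} (hc : c < m) : #{t ∈ Icc 1 (m - 1) | m - t ≤ c} = c := by
  have : {t ∈ Icc 1 (m - 1) | m - t ≤ c} = Icc (m - c) (m - 1) := by
    ext t
    simp only [mem_filter, mem_Icc]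
    omega
  rw [this, Nat.card_Icc]
  omega

lemma card_filter_range_lt {k c : ℕ} (hc : c ≤ k) : #{i ∈ range k | i < c} = c := by
  have : {i ∈ range k | i < c} = range c := by
    ext i
    simp only [mem_filter, mem_range]
    omega
  rw [this, card_range]

def zeroExtend {n : ℕ} (f : Fin n → ℕ) (j : ℕ) : ℕ := if h : j < n then f ⟨j, h⟩ else 0

section ZeroExtend

variable {n : ℕ} (f : Fin n → ℕ)

lemma zeroExtend_val (i : Fin n) : zeroExtend f i = f i := dif_pos i.isLt

lemma zeroExtend_of_le {j : ℕ} (h : n ≤ j) : zeroExtend f j = 0 := dif_neg (by omega)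

lemma sum_range_zeroExtend {t : ℕ} (h : n ≤ t) : ∑ j ∈ range t, zeroExtend f j = ∑ i, f i := by
  rw [← sum_range_add_sum_Ico _ h, sum_eq_zero fun j hj => zeroExtend_of_le f (mem_Ico.1 hj).1,
    add_zero, ← Fin.sum_univ_eq_sum_range]
  simp only [zeroExtend_val]

end ZeroExtend

def partialSum {m : ℕ} (lam : Fin m → ℕ) (t : ℕ) : ℕ := ∑ j ∈ range t, zeroExtend lam j

def tailSum {k : ℕ} (a : Fin k → ℕ) (i : ℕ) : ℕ := ∑ j ∈ Ico i k, zeroExtend a j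

def levelCount (m : ℕ) (S : ℕ → ℕ) (i : ℕ) : ℕ := #{t ∈ Icc 1 (m - 1) | i < S t}

def dualCount (m k : ℕ) (T : ℕ → ℕ) (t : ℕ) : ℕ := #{i ∈ range k | m - t ≤ T i}

variable {m k : ℕ}

section PartialSum

variable (lam : Fin m → ℕ)

lemma partialSum_monotone : Monotone (partialSum lam) := fun _ _ h =>
  sum_le_sum_of_subset (range_subset_range.2 h)

lemma partialSum_zero : partialSum lam 0 = 0 := sum_range_zero _

lemma partialSum_succ (t : Fin m) : partialSum lam (t + 1) = partialSum lam t + lam t := by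
  rw [partialSum, sum_range_succ, zeroExtend_val]
  rfl

lemma partialSum_of_le {t : ℕ} (h : m ≤ t) : partialSum lam t = ∑ i, lam i :=
  sum_range_zeroExtend lam h

lemma partialSum_le_sum (t : ℕ) : partialSum lam t ≤ ∑ i, lam i :=
  (partialSum_monotone lam (le_max_left t m)).trans_eq (partialSum_of_le lam (le_max_right t m))

end PartialSum

lemma partialSum_succ_tsub {F : ℕ → ℕ} (hF : Monotone F) (hF0 : F 0 = 0) {t : ℕ} (ht : t ≤ m) :
    partialSum (fun s : Fin m => F (s + 1) - F s) t = F t := by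
  calc partialSum (fun s : Fin m => F (s + 1) - F s) t
      = ∑ j ∈ range t, (F (j + 1) - F j) :=
        sum_congr rfl fun j hj => dif_pos ((mem_range.1 hj).trans_le ht)
    _ = F t := by rw [sum_range_tsub hF, hF0, tsub_zero]

section TailSum

variable (a : Fin k → ℕ)

lemma tailSum_antitone : Antitone (tailSum a) := fun _ _ h =>
  sum_le_sum_of_subset (Ico_subset_Ico h le_rfl)

lemma tailSum_zero : tailSum a 0 = ∑ i, a i := by
  rw [tailSum, ← range_eq_Ico, sum_range_zeroExtend a le_rfl]

lemma tailSum_le_sum (i : ℕ) : tailSum a i ≤ ∑ j, a j :=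
  tailSum_zero a ▸ tailSum_antitone a (Nat.zero_le i)

lemma tailSum_of_le {i : ℕ} (h : k ≤ i) : tailSum a i = 0 := by
  rw [tailSum, Ico_eq_empty_of_le h, sum_empty]

lemma tailSum_eq_add (i : Fin k) : tailSum a i = a i + tailSum a (i + 1) := by
  rw [tailSum, sum_eq_sum_Ico_succ_bot i.isLt, zeroExtend_val]
  rfl

end TailSum

lemma tailSum_eq_of_eq_tsub {a : Fin k → ℕ} {B : ℕ → ℕ} (hB : Antitone B) (hBk : B k = 0)
    (ha : ∀ i : Fin k, a i = B i - B (i + 1)) (i : ℕ) : tailSum a i = B i := by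
  suffices ∀ n i, k ≤ i + n → tailSum a i = B i from this k i (by omega)
  intro n
  induction n with
  | zero =>
    intro i hi
    have hBi : B i ≤ B k := hB (by omega)
    rw [tailSum_of_le a (by omega)]
    omega
  | succ n ih =>
    intro i hi
    rcases lt_or_ge i k with hik | hki
    · have hstep : tailSum a i = a ⟨i, hik⟩ + B (i + 1) :=
        (tailSum_eq_add a ⟨i, hik⟩).trans (by rw [ih (i + 1) (by omega)])
      have hai : a ⟨i, hik⟩ = B i - B (i + 1) := ha ⟨i, hik⟩
      have hBi : B (i + 1) ≤ B i := hB (by omega)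
      omega
    · exact ih i (by omega)

section LevelCount

variable (m) (S : ℕ → ℕ)

lemma slimB_eq_levelCount (lam : Fin m → ℕ) (i : Fin k) :
    slimB m k lam i = levelCount m (partialSum lam) i := rfl

lemma levelCount_antitone : Antitone (levelCount m S) := fun _ _ h =>
  card_le_card (monotone_filter_right _ fun _ _ => h.trans_lt)

lemma levelCount_le (i : ℕ) : levelCount m S i ≤ m - 1 :=
  (card_filter_le _ _).trans_eq (by rw [Nat.card_Icc]; omega)

variable {m S}

lemma levelCount_eq_zero (hS : ∀ t, S t ≤ k) {i : ℕ} (hi : k ≤ i) : levelCount m S i = 0 :=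
  card_eq_zero.2 (filter_eq_empty_iff.2 fun t _ => by have := hS t; omega)

lemma levelCount_congr {S' : ℕ → ℕ} (h : ∀ t < m, S t = S' t) :
    levelCount m S = levelCount m S' := by
  funext i
  exact congrArg card (filter_congr fun t ht => by rw [h t (by simp only [mem_Icc] at ht; omega)])

lemma le_levelCount_iff (hS : Monotone S) {i t : ℕ} (ht : 1 ≤ t) (htm : t < m) :
    m - t ≤ levelCount m S i ↔ i < S t := by
  have := le_card_filter_Icc_iff (P := fun s => i < S s) (fun _ _ h hi => hi.trans_le (hS h))
    ht (Nat.le_sub_one_of_lt htm)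
  rwa [show m - 1 + 1 - t = m - t by omega] at this

end LevelCount

section DualCount

variable (m k) {T : ℕ → ℕ}

lemma dualCount_monotone : Monotone (dualCount m k T) := fun _ _ h =>
  card_le_card (monotone_filter_right _ fun _ _ => (Nat.sub_le_sub_left h m).trans)

lemma dualCount_self : dualCount m k T m = k := by
  rw [dualCount, Nat.sub_self, filter_true_of_mem fun i _ => Nat.zero_le (T i), card_range]

variable {m k}

lemma dualCount_zero (hT : ∀ i, T i < m) : dualCount m k T 0 = 0 :=
  card_eq_zero.2 (filter_eq_empty_iff.2 fun i _ => by have := hT i; omega)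

lemma lt_dualCount_iff (hT : Antitone T) {i t : ℕ} (hi : i < k) :
    i < dualCount m k T t ↔ m - t ≤ T i :=
  lt_card_filter_range_iff (fun _ _ h hj => hj.trans (hT h)) hi

end DualCount

lemma levelCount_dualCount {T : ℕ → ℕ} (hT : Antitone T) (hTm : ∀ i, T i < m) {i : ℕ}
    (hi : i < k) : levelCount m (dualCount m k T) i = T i := by
  rw [levelCount, filter_congr fun t _ => lt_dualCount_iff hT hi, card_filter_Icc_sub_le (hTm i)]

lemma dualCount_levelCount (hm : 0 < m) {S : ℕ → ℕ} (hS : Monotone S) (hS0 : S 0 = 0)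
    (hSm : S m = k) {t : ℕ} (ht : t ≤ m) : dualCount m k (levelCount m S) t = S t := by
  have hiff : ∀ i < k, m - t ≤ levelCount m S i ↔ i < S t := by
    intro i hi
    rcases Nat.eq_zero_or_pos t with rfl | ht0
    · have := levelCount_le m S i
      rw [hS0]
      omega
    rcases ht.lt_or_eq with htm | rfl
    · exact le_levelCount_iff hS ht0 htm
    · rw [hSm, Nat.sub_self]
      exact iff_of_true (Nat.zero_le _) hi
  rw [dualCount, filter_congr fun i hi => hiff i (mem_range.1 hi),
    card_filter_range_lt (hSm ▸ hS ht)]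

lemma slimDdot_apply {lam : Fin m → ℕ} (hsum : ∑ i, lam i = k) (i : Fin k) :
    slimDdot m k lam i =
      levelCount m (partialSum lam) i - levelCount m (partialSum lam) (i + 1) := by
  rw [slimDdot, slimB_eq_levelCount]
  split_ifs with h
  · rfl
  · rw [levelCount_eq_zero (fun t => (partialSum_le_sum lam t).trans_eq hsum)
      (i := i + 1) (by omega)]

def slimDdotInv (m k : ℕ) (a : Fin k → ℕ) : Fin m → ℕ :=
  fun t => dualCount m k (tailSum a) (t + 1) - dualCount m k (tailSum a) t

section Inverse

variable {a : Fin k → ℕ}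

lemma tailSum_lt (hm : 0 < m) (ha : ∑ i, a i ≤ m - 1) (i : ℕ) : tailSum a i < m := by
  have := tailSum_le_sum a i
  omega

lemma partialSum_slimDdotInv (hm : 0 < m) (ha : ∑ i, a i ≤ m - 1) {t : ℕ} (ht : t ≤ m) :
    partialSum (slimDdotInv m k a) t = dualCount m k (tailSum a) t :=
  partialSum_succ_tsub (dualCount_monotone m k) (dualCount_zero (tailSum_lt hm ha)) ht

lemma sum_slimDdotInv (hm : 0 < m) (ha : ∑ i, a i ≤ m - 1) : ∑ t, slimDdotInv m k a t = k := by
  rw [← partialSum_of_le _ le_rfl, partialSum_slimDdotInv hm ha le_rfl, dualCount_self]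

lemma slimDdot_slimDdotInv (hm : 0 < m) (ha : ∑ i, a i ≤ m - 1) :
    slimDdot m k (slimDdotInv m k a) = a := by
  have hsum := sum_slimDdotInv hm ha
  have hlevel : ∀ i, levelCount m (partialSum (slimDdotInv m k a)) i = tailSum a i := by
    intro i
    rcases lt_or_ge i k with hi | hi
    · rw [levelCount_congr fun t ht => partialSum_slimDdotInv hm ha ht.le,
        levelCount_dualCount (tailSum_antitone a) (tailSum_lt hm ha) hi]
    · rw [levelCount_eq_zero (fun t => (partialSum_le_sum _ t).trans_eq hsum) hi, tailSum_of_le a hi]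
  funext i
  rw [slimDdot_apply hsum, hlevel, hlevel, tailSum_eq_add a i, Nat.add_sub_cancel]

end Inverse

section Forward

variable {lam : Fin m → ℕ}

lemma tailSum_slimDdot (hsum : ∑ i, lam i = k) :
    tailSum (slimDdot m k lam) = levelCount m (partialSum lam) :=
  funext (tailSum_eq_of_eq_tsub (levelCount_antitone m _)
    (levelCount_eq_zero (fun t => (partialSum_le_sum lam t).trans_eq hsum) le_rfl) (slimDdot_apply hsum))

lemma sum_slimDdot_le (hsum : ∑ i, lam i = k) : ∑ i, slimDdot m k lam i ≤ m - 1 := by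
  rw [← tailSum_zero, tailSum_slimDdot hsum]
  exact levelCount_le m _ 0

lemma slimDdotInv_slimDdot (hm : 0 < m) (hsum : ∑ i, lam i = k) :
    slimDdotInv m k (slimDdot m k lam) = lam := by
  have hSm : partialSum lam m = k := (partialSum_of_le lam le_rfl).trans hsum
  have hconj {t : ℕ} (ht : t ≤ m) :=
    dualCount_levelCount hm (partialSum_monotone lam) (partialSum_zero lam) hSm ht
  funext t
  rw [slimDdotInv, tailSum_slimDdot hsum, hconj t.isLt, hconj t.isLt.le, partialSum_succ,
    Nat.add_sub_cancel_left]

end Forward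

end Slim

open Slim

theorem slim_ddot_bijOn_general (m k : ℕ) (hm : 0 < m) :
    Set.BijOn (slimDdot m k)
      {lam : Fin m → ℕ | ∑ i, lam i = k}
      {a : Fin k → ℕ | ∑ i, a i ≤ m - 1} :=
  Set.InvOn.bijOn (f' := slimDdotInv m k)
    ⟨fun _ hlam => slimDdotInv_slimDdot hm hlam, fun _ ha => slimDdot_slimDdotInv hm ha⟩
    (fun _ hlam => sum_slimDdot_le hlam) (fun _ ha => sum_slimDdotInv hm ha)

/-- The map `λ ↦ λ̈` is a bijection from the set of compositions of `k`
into `m` nonnegative parts onto the set of vectors `(a_1,…,a_k)` of nonnegative integers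
with `a_1 + ⋯ + a_k ≤ m − 1`. -/
theorem slim_ddot_bijOn (m k : ℕ) (hm : 0 < m) (hk : 0 < k) :
    Set.BijOn (slimDdot m k)
      {lam : Fin m → ℕ | ∑ i, lam i = k}
      {a : Fin k → ℕ | ∑ i, a i ≤ m - 1} :=
  slim_ddot_bijOn_general m k hm
end

section
/- In the Ariki–Koike algebra H_u(r), for 1 ≤ i ≤ r−1 and a ∈ ℕ^r, one has: L^a T_i = T_i L^{a·s_i} if a_i = a_{i+1}; L^a T_i = T_i L^{a·s_i} + (q−1) Σ_{t=1}^{a_{i+1}−a_i} L^{a·s_i − tα_i} if a_i < a_{i+1}; and L^a T_i = T_i L^{a·s_i} + (1−q) Σ_{t=0}^{a_i−a_{i+1}−1} L^{a·s_i + tα_i} if a_i > a_{i+1}. -/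
/-- The monomial `L^a = L_1^{a_1} ⋯ L_r^{a_r}`. -/
def akLmon {H : Type} [Ring H] (L : ℕ → H) (r : ℕ) (a : ℕ → ℕ) : H :=
  ((List.range r).map (fun j => L (j + 1) ^ a (j + 1))).prod

/-- The exponent vector `a·s_i` (entries `i` and `i+1` of `a` swapped). -/
def akSwap (a : ℕ → ℕ) (i : ℕ) : ℕ → ℕ :=
  fun j => if j = i then a (i + 1) else if j = i + 1 then a i else a j

/-- The exponent vector `a·s_i − t·α_i` (valid when `a_i < a_{i+1}`, `1 ≤ t ≤ a_{i+1} − a_i`). -/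
def akSwapSub (a : ℕ → ℕ) (i t : ℕ) : ℕ → ℕ :=
  fun j => if j = i then a (i + 1) - t else if j = i + 1 then a i + t else a j

/-- The exponent vector `a·s_i + t·α_i` (valid when `a_i > a_{i+1}`, `0 ≤ t ≤ a_i − a_{i+1} − 1`). -/
def akSwapAdd (a : ℕ → ℕ) (i t : ℕ) : ℕ → ℕ :=
  fun j => if j = i then a (i + 1) + t else if j = i + 1 then a i - t else a j

/-! Only `t = T_i`, `x = L_i`, `y = L_{i+1}` interact. The quadratic relation gives
`(t - (q - 1)) t = q`, so `t` is invertible up to the unit `q`, and `t x t = q y` can be solved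
for `x t = t y + (1 - q) y` and `y t = t x + (q - 1) y`. Hence `t` commutes with `x y`, and
induction on the exponents gives `x^a y^b t`. The remaining factors `L_j^{a_j}` of `L^a` commute
with `t` and are the same in every term of the formula. -/

theorem Commute.mul_pow_mul_pow_mul_pow {M : Type*} [Monoid M] {x y : M} (hxy : Commute x y)
    (c k l : ℕ) : (x * y) ^ c * (x ^ k * y ^ l) = x ^ (c + k) * y ^ (c + l) := by
  rw [hxy.mul_pow, mul_assoc, ← mul_assoc (y ^ c), (hxy.symm.pow_pow c k).eq, pow_add, pow_add]
  simp only [mul_assoc]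

theorem mul_mul_mul_eq_of_commute {M : Type*} [Semiring M] {p s m m' t z : M}
    (hp : Commute t p) (hs : Commute t s) (h : m * t = t * m' + z) :
    p * m * s * t = t * (p * m' * s) + p * z * s := by
  rw [mul_assoc, ← hs.eq, ← mul_assoc, mul_assoc p, h, mul_add, add_mul, ← mul_assoc p t,
    ← hp.eq]
  simp only [mul_assoc]

namespace ArikiKoike

section Block

variable {R H : Type*} [CommRing R] [Ring H] [Algebra R H] {q : R} {t x y : H}

theorem mul_self_eq_of_quadratic (hquad : (t + 1) * (t - algebraMap R H q) = 0) :
    t * t = (q - 1) • t + algebraMap R H q := by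
  rw [← sub_eq_zero, ← hquad, Algebra.smul_def, map_sub, map_one, sub_mul,
    Algebra.commutes q t]
  noncomm_ring

theorem sub_smul_one_mul_eq_of_quadratic (hquad : (t + 1) * (t - algebraMap R H q) = 0) :
    (t - (q - 1) • 1) * t = algebraMap R H q := by
  rw [sub_mul, mul_self_eq_of_quadratic hquad, smul_one_mul, add_sub_cancel_left]

variable (hq : IsUnit q) (hquad : (t + 1) * (t - algebraMap R H q) = 0)
  (htxt : t * x * t = algebraMap R H q * y)
include hq hquad htxt

theorem mul_eq_of_quadratic_left : x * t = t * y + (1 - q) • y := by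
  rw [← hq.smul_left_cancel, Algebra.smul_def q (x * t),
    ← sub_smul_one_mul_eq_of_quadratic hquad]
  calc (t - (q - 1) • 1) * t * (x * t) = (t - (q - 1) • 1) * (t * x * t) := by noncomm_ring
    _ = _ := by
      rw [htxt, ← mul_assoc, ← Algebra.commutes, mul_assoc, ← Algebra.smul_def]
      congr 1
      rw [sub_mul, smul_one_mul, sub_smul, sub_smul, one_smul]
      abel

theorem mul_eq_of_quadratic_right : y * t = t * x + (q - 1) • y := by
  rw [← hq.smul_left_cancel, Algebra.smul_def q (y * t), ← mul_assoc, ← htxt]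
  calc t * x * t * t = t * x * (t * t) := by noncomm_ring
    _ = (q - 1) • (algebraMap R H q * y) + algebraMap R H q * (t * x) := by
      rw [mul_self_eq_of_quadratic hquad, mul_add, mul_smul_comm, htxt,
        ← Algebra.commutes q (t * x)]
    _ = q • (t * x + (q - 1) • y) := by
      rw [← Algebra.smul_def, ← Algebra.smul_def, smul_comm (q - 1) q, smul_add, add_comm]

theorem commute_mul_of_quadratic (hxy : Commute x y) : Commute t (x * y) := by
  have h := mul_eq_of_quadratic_left hq hquad htxt
  have h' := mul_eq_of_quadratic_right hq hquad htxt
  calc t * (x * y) = (y * t - (q - 1) • y) * y := by rw [h', add_sub_cancel_right, mul_assoc]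
    _ = y * (x * t - (1 - q) • y) - (q - 1) • (y * y) := by
      rw [h, add_sub_cancel_right, sub_mul, smul_mul_assoc, mul_assoc]
    _ = x * y * t := by
      rw [mul_sub, mul_smul_comm, sub_sub, ← add_smul, sub_add_sub_cancel', sub_self, zero_smul,
        sub_zero, ← mul_assoc, hxy.eq]

theorem pow_mul_eq_of_quadratic_left (n : ℕ) :
    x ^ n * t = t * y ^ n + (1 - q) • ∑ s ∈ Finset.range n, x ^ s * y ^ (n - s) := by
  induction n with
  | zero => simp
  | succ n ih =>
    calc x ^ (n + 1) * t = (x ^ n * t) * y + (1 - q) • (x ^ n * y) := by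
          rw [pow_succ, mul_assoc, mul_eq_of_quadratic_left hq hquad htxt, mul_add,
            mul_smul_comm, ← mul_assoc]
      _ = t * y ^ (n + 1) +
            (1 - q) • ∑ s ∈ Finset.range (n + 1), x ^ s * y ^ (n + 1 - s) := by
          rw [ih, add_mul, smul_mul_assoc, Finset.sum_mul, mul_assoc, ← pow_succ, add_assoc,
            ← smul_add, Finset.sum_range_succ, Nat.add_sub_cancel_left, pow_one]
          congr 3
          refine Finset.sum_congr rfl fun s hs => ?_
          rw [mul_assoc, ← pow_succ, Nat.sub_add_comm (Finset.mem_range.1 hs).le]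

theorem pow_mul_eq_of_quadratic_right (hxy : Commute x y) (n : ℕ) :
    y ^ n * t = t * x ^ n + (q - 1) • ∑ s ∈ Finset.Icc 1 n, x ^ (n - s) * y ^ s := by
  induction n with
  | zero => simp
  | succ n ih =>
    calc y ^ (n + 1) * t = (y ^ n * t) * x + (q - 1) • y ^ (n + 1) := by
          rw [pow_succ, mul_assoc, mul_eq_of_quadratic_right hq hquad htxt, mul_add,
            mul_smul_comm, ← mul_assoc]
      _ = t * x ^ (n + 1) +
            (q - 1) • ∑ s ∈ Finset.Icc 1 (n + 1), x ^ (n + 1 - s) * y ^ s := by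
          rw [ih, add_mul, smul_mul_assoc, Finset.sum_mul, mul_assoc, ← pow_succ, add_assoc,
            ← smul_add, Finset.sum_Icc_succ_top (by omega), Nat.sub_self, pow_zero, one_mul]
          congr 3
          refine Finset.sum_congr rfl fun s hs => ?_
          rw [mul_assoc, (hxy.symm.pow_left s).eq, ← mul_assoc, ← pow_succ,
            Nat.sub_add_comm (Finset.mem_Icc.1 hs).2]

theorem pow_mul_pow_mul_eq_of_le (hxy : Commute x y) {a b : ℕ} (hab : a ≤ b) :
    x ^ a * y ^ b * t = t * (x ^ b * y ^ a) +
      (q - 1) • ∑ s ∈ Finset.Icc 1 (b - a), x ^ (b - s) * y ^ (a + s) := by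
  obtain ⟨d, rfl⟩ := Nat.exists_eq_add_of_le hab
  have hct := (commute_mul_of_quadratic hq hquad htxt hxy).pow_right a
  calc x ^ a * y ^ (a + d) * t = (x * y) ^ a * (y ^ d * t) := by
        simp only [pow_add, hxy.mul_pow, mul_assoc]
    _ = t * ((x * y) ^ a * (x ^ d * y ^ 0))
          + (q - 1) • ∑ s ∈ Finset.Icc 1 d, (x * y) ^ a * (x ^ (d - s) * y ^ s) := by
        rw [pow_mul_eq_of_quadratic_right hq hquad htxt hxy, mul_add, mul_smul_comm,
          Finset.mul_sum, ← mul_assoc, ← hct.eq, mul_assoc, pow_zero, mul_one]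
    _ = _ := by
        rw [hxy.mul_pow_mul_pow_mul_pow, add_zero, Nat.add_sub_cancel_left]
        congr 2
        refine Finset.sum_congr rfl fun s hs => ?_
        rw [hxy.mul_pow_mul_pow_mul_pow, Nat.add_sub_assoc (Finset.mem_Icc.1 hs).2]

theorem pow_mul_pow_mul_eq_of_ge (hxy : Commute x y) {a b : ℕ} (hba : b ≤ a) :
    x ^ a * y ^ b * t = t * (x ^ b * y ^ a) +
      (1 - q) • ∑ s ∈ Finset.range (a - b), x ^ (b + s) * y ^ (a - s) := by
  obtain ⟨d, rfl⟩ := Nat.exists_eq_add_of_le hba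
  have hct := (commute_mul_of_quadratic hq hquad htxt hxy).pow_right b
  calc x ^ (b + d) * y ^ b * t = (x * y) ^ b * (x ^ d * t) := by
        rw [← mul_assoc, ← mul_one (x ^ d), ← pow_zero y, hxy.mul_pow_mul_pow_mul_pow,
          add_zero]
    _ = t * ((x * y) ^ b * (x ^ 0 * y ^ d))
          + (1 - q) • ∑ s ∈ Finset.range d, (x * y) ^ b * (x ^ s * y ^ (d - s)) := by
        rw [pow_mul_eq_of_quadratic_left hq hquad htxt, mul_add, mul_smul_comm,
          Finset.mul_sum, ← mul_assoc, ← hct.eq, mul_assoc, pow_zero, one_mul]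
    _ = _ := by
        rw [hxy.mul_pow_mul_pow_mul_pow, add_zero, Nat.add_sub_cancel_left]
        congr 2
        refine Finset.sum_congr rfl fun s hs => ?_
        rw [hxy.mul_pow_mul_pow_mul_pow, Nat.add_sub_assoc (Finset.mem_range.1 hs).le]

end Block

section Monomial

variable {H : Type} [Ring H] {L : ℕ → H}

theorem akLmon_succ (n : ℕ) (b : ℕ → ℕ) :
    akLmon L (n + 1) b = akLmon L n b * L (n + 1) ^ b (n + 1) := by
  simp [akLmon, List.range_succ]

theorem akLmon_add (n k : ℕ) (b : ℕ → ℕ) :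
    akLmon L (n + k) b = akLmon L n b * akLmon (fun j => L (n + j)) k (fun j => b (n + j)) := by
  simp [akLmon, List.range_add, Function.comp_def, add_assoc]

theorem akLmon_congr {n : ℕ} {a b : ℕ → ℕ} (h : ∀ j, 1 ≤ j → j ≤ n → a j = b j) :
    akLmon L n a = akLmon L n b := by
  refine congrArg List.prod (List.map_congr_left fun j hj => ?_)
  rw [h (j + 1) (by omega) (by simpa using hj)]

theorem commute_akLmon {t : H} {n : ℕ} (h : ∀ j, 1 ≤ j → j ≤ n → Commute t (L j))
    (b : ℕ → ℕ) : Commute t (akLmon L n b) := by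
  refine Commute.list_prod_right _ _ fun z hz => ?_
  obtain ⟨j, hj, rfl⟩ := List.mem_map.1 hz
  exact (h (j + 1) (by omega) (by simpa using hj)).pow_right _

theorem akLmon_eq_mul_pow_mul_pow_mul {r i : ℕ} (hi : 1 ≤ i) (hir : i + 1 ≤ r)
    (b : ℕ → ℕ) :
    akLmon L r b = akLmon L (i - 1) b * (L i ^ b i * L (i + 1) ^ b (i + 1)) *
      akLmon (fun j => L (i + 1 + j)) (r - (i + 1)) (fun j => b (i + 1 + j)) := by
  obtain ⟨n, rfl⟩ : ∃ n, i = n + 1 := ⟨i - 1, by omega⟩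
  obtain ⟨k, rfl⟩ : ∃ k, r = n + 1 + 1 + k := ⟨r - (n + 2), by omega⟩
  rw [akLmon_add, akLmon_succ, akLmon_succ, Nat.add_sub_cancel, Nat.add_sub_cancel_left]
  simp only [mul_assoc]

theorem akLmon_mul_eq_of_block {R ι : Type*} [CommSemiring R] [Algebra R H] {t : H} {r i : ℕ}
    (hi : 1 ≤ i) (hir : i + 1 ≤ r)
    (hL : ∀ j, 1 ≤ j → j ≤ r → j ≠ i → j ≠ i + 1 → Commute t (L j))
    {a a' : ℕ → ℕ} {c : R} {s : Finset ι} {g : ι → ℕ → ℕ}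
    (ha' : ∀ j, j ≠ i → j ≠ i + 1 → a' j = a j)
    (hg : ∀ k ∈ s, ∀ j, j ≠ i → j ≠ i + 1 → g k j = a j)
    (h : L i ^ a i * L (i + 1) ^ a (i + 1) * t =
      t * (L i ^ a' i * L (i + 1) ^ a' (i + 1)) +
        c • ∑ k ∈ s, L i ^ g k i * L (i + 1) ^ g k (i + 1)) :
    akLmon L r a * t = t * akLmon L r a' + c • ∑ k ∈ s, akLmon L r (g k) := by
  set P := akLmon L (i - 1) a
  set S := akLmon (fun j => L (i + 1 + j)) (r - (i + 1)) (fun j => a (i + 1 + j))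
  have hfac : ∀ b : ℕ → ℕ, (∀ j, j ≠ i → j ≠ i + 1 → b j = a j) →
      akLmon L r b = P * (L i ^ b i * L (i + 1) ^ b (i + 1)) * S := by
    intro b hb
    rw [akLmon_eq_mul_pow_mul_pow_mul hi hir,
      akLmon_congr fun j _ _ => hb j (by omega) (by omega),
      akLmon_congr fun j _ _ => hb (i + 1 + j) (by omega) (by omega)]
  have hP : Commute t P :=
    commute_akLmon (fun j _ _ => hL j (by omega) (by omega) (by omega) (by omega)) _
  have hS : Commute t S :=
    commute_akLmon (fun j _ _ => hL (i + 1 + j) (by omega) (by omega) (by omega) (by omega)) _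
  rw [hfac a fun _ _ _ => rfl, hfac a' ha', Finset.sum_congr rfl fun k hk => hfac (g k) (hg k hk),
    mul_mul_mul_eq_of_commute hP hS h, mul_smul_comm, smul_mul_assoc, Finset.mul_sum,
    Finset.sum_mul]

end Monomial

end ArikiKoike

theorem ariki_koike_Lmon_T_commutation_general
    (R : Type) [CommRing R] (q : R) (hq : IsUnit q) (r : ℕ)
    (H : Type) [Ring H] [Algebra R H]
    (T L : ℕ → H)
    (hquad : ∀ i, 1 ≤ i → i ≤ r - 1 → (T i + 1) * (T i - algebraMap R H q) = 0)
    (hLL : ∀ i j, 1 ≤ i → i ≤ r → 1 ≤ j → j ≤ r → L i * L j = L j * L i)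
    (hTLT : ∀ i, 1 ≤ i → i ≤ r - 1 → T i * L i * T i = algebraMap R H q * L (i + 1))
    (hLT : ∀ i j, 1 ≤ i → i ≤ r - 1 → 1 ≤ j → j ≤ r → j ≠ i → j ≠ i + 1 →
      L j * T i = T i * L j) :
    ∀ (i : ℕ), 1 ≤ i → i ≤ r - 1 → ∀ a : ℕ → ℕ,
      (a i = a (i + 1) → akLmon L r a * T i = T i * akLmon L r (akSwap a i)) ∧
      (a i < a (i + 1) →
        akLmon L r a * T i = T i * akLmon L r (akSwap a i) +
          (q - 1) • ∑ t ∈ Finset.Icc 1 (a (i + 1) - a i), akLmon L r (akSwapSub a i t)) ∧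
      (a i > a (i + 1) →
        akLmon L r a * T i = T i * akLmon L r (akSwap a i) +
          (1 - q) • ∑ t ∈ Finset.range (a i - a (i + 1)), akLmon L r (akSwapAdd a i t)) := by
  intro i hi hir a
  have hquad_i := hquad i hi hir
  have hTLT_i := hTLT i hi hir
  have hcomm : Commute (L i) (L (i + 1)) := hLL i (i + 1) hi (by omega) (by omega) (by omega)
  have hL : ∀ j, 1 ≤ j → j ≤ r → j ≠ i → j ≠ i + 1 → Commute (T i) (L j) :=
    fun j hj hjr hji hji' => (hLT i j hi hir hj hjr hji hji').symm
  have hswap : ∀ j, j ≠ i → j ≠ i + 1 → akSwap a i j = a j :=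
    fun j hji hji' => by simp [akSwap, hji, hji']
  have hle : a i ≤ a (i + 1) → akLmon L r a * T i = T i * akLmon L r (akSwap a i) +
      (q - 1) • ∑ t ∈ Finset.Icc 1 (a (i + 1) - a i), akLmon L r (akSwapSub a i t) := fun h =>
    ArikiKoike.akLmon_mul_eq_of_block hi (by omega) hL hswap
      (fun k _ j hji hji' => by simp [akSwapSub, hji, hji'])
      (by simpa [akSwap, akSwapSub] using
        ArikiKoike.pow_mul_pow_mul_eq_of_le hq hquad_i hTLT_i hcomm h)
  refine ⟨fun heq => by simpa [heq] using hle heq.le, fun hlt => hle hlt.le, fun hgt => ?_⟩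
  exact ArikiKoike.akLmon_mul_eq_of_block hi (by omega) hL hswap
    (fun k _ j hji hji' => by simp [akSwapAdd, hji, hji'])
    (by simpa [akSwap, akSwapAdd] using
      ArikiKoike.pow_mul_pow_mul_eq_of_ge hq hquad_i hTLT_i hcomm hgt.le)

/-- In the Ariki–Koike algebra, for `1 ≤ i ≤ r−1` and `a ∈ ℕ^r`:
`L^a T_i = T_i L^{a·s_i}` if `a_i = a_{i+1}`;
`L^a T_i = T_i L^{a·s_i} + (q−1) Σ_{t=1}^{a_{i+1}−a_i} L^{a·s_i − tα_i}` if `a_i < a_{i+1}`;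
`L^a T_i = T_i L^{a·s_i} + (1−q) Σ_{t=0}^{a_i−a_{i+1}−1} L^{a·s_i + tα_i}` if `a_i > a_{i+1}`. -/
theorem ariki_koike_Lmon_T_commutation
    (R : Type) [CommRing R] (q : R) (hq : IsUnit q) (m r : ℕ) (hm : 0 < m)
    (u : Fin m → R)
    (H : Type) [Ring H] [Algebra R H]
    (T L : ℕ → H)
    (hquad : ∀ i, 1 ≤ i → i ≤ r - 1 → (T i + 1) * (T i - algebraMap R H q) = 0)
    (hbraid : ∀ i, 1 ≤ i → i + 1 ≤ r - 1 → T i * T (i + 1) * T i = T (i + 1) * T i * T (i + 1))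
    (hTT : ∀ i j, 1 ≤ i → j ≤ r - 1 → i + 1 < j → T i * T j = T j * T i)
    (hLL : ∀ i j, 1 ≤ i → i ≤ r → 1 ≤ j → j ≤ r → L i * L j = L j * L i)
    (hcyclo : (List.ofFn (fun k : Fin m => L 1 - algebraMap R H (u k))).prod = 0)
    (hTLT : ∀ i, 1 ≤ i → i ≤ r - 1 → T i * L i * T i = algebraMap R H q * L (i + 1))
    (hLT : ∀ i j, 1 ≤ i → i ≤ r - 1 → 1 ≤ j → j ≤ r → j ≠ i → j ≠ i + 1 →
      L j * T i = T i * L j) :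
    ∀ (i : ℕ), 1 ≤ i → i ≤ r - 1 → ∀ a : ℕ → ℕ,
      (a i = a (i + 1) → akLmon L r a * T i = T i * akLmon L r (akSwap a i)) ∧
      (a i < a (i + 1) →
        akLmon L r a * T i = T i * akLmon L r (akSwap a i) +
          (q - 1) • ∑ t ∈ Finset.Icc 1 (a (i + 1) - a i), akLmon L r (akSwapSub a i t)) ∧
      (a i > a (i + 1) →
        akLmon L r a * T i = T i * akLmon L r (akSwap a i) +
          (1 - q) • ∑ t ∈ Finset.range (a i - a (i + 1)), akLmon L r (akSwapAdd a i t)) :=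
  ariki_koike_Lmon_T_commutation_general R q hq r H T L hquad hLL hTLT hLT
end

section
/- In the Ariki–Koike algebra H_u(r), each elementary symmetric polynomial σ_j in the Jucys–Murphy elements L_1,…,L_r commutes with every generator T_i (1 ≤ i ≤ r−1). -/
/-!
Write `Q` for the image of `q`. Cancelling the unit `Q` from
`Q T_i L_{i+1} = T_i (T_i L_i T_i) = ((Q - 1) T_i + Q) L_i T_i` gives
`T_i L_{i+1} = (Q - 1) L_{i+1} + L_i T_i`, and symmetrically for `T_i L_i`; hence `T_i` commutes
with `L_i + L_{i+1}` and `L_i L_{i+1}`, and by hypothesis with every other `L_k`. Now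
`σ_j(L_1, …, L_{i+1})` is a combination of the `σ_•(L_1, …, L_{i-1})` with coefficients `1`,
`L_i + L_{i+1}` and `L_i L_{i+1}`, and
`σ_j(L_{≤n+1}) = σ_j(L_{≤n}) + σ_{j-1}(L_{≤n}) L_{n+1}` adjoins `L_{i+2}, …, L_r` one at a time.
-/

/-- The `j`-th elementary symmetric polynomial
`σ_j = Σ_{1 ≤ k_1 < ⋯ < k_j ≤ r} L_{k_1} ⋯ L_{k_j}` in `L_1, …, L_r`. -/
def akElemSym {H : Type} [Ring H] (L : ℕ → H) (r j : ℕ) : H :=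
  ∑ s ∈ Finset.powersetCard j (Finset.Icc 1 r), ((s.sort (· ≤ ·)).map L).prod

theorem Finset.sort_insert_eq_append_of_forall_le {α : Type*} [LinearOrder α] {s : Finset α}
    {x : α} (hle : ∀ b ∈ s, b ≤ x) (hx : x ∉ s) :
    (insert x s).sort (· ≤ ·) = s.sort (· ≤ ·) ++ [x] := by
  have hnodup : (s.sort (· ≤ ·) ++ [x]).Nodup :=
    List.nodup_append.mpr ⟨s.sort_nodup _, List.nodup_singleton x,
      fun a ha b hb => by rintro rfl; simp_all⟩
  have hsorted : (s.sort (· ≤ ·) ++ [x]).Pairwise (· ≤ ·) :=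
    List.pairwise_append.mpr ⟨s.pairwise_sort _, List.pairwise_singleton _ x,
      fun a ha b hb => by simp_all⟩
  have hset : (s.sort (· ≤ ·) ++ [x]).toFinset = insert x s := by
    ext; simp
  rw [← hset, (List.toFinset_sort _ hnodup).mpr hsorted]

section ElementarySymmetric

variable {H : Type} [Ring H] (L : ℕ → H)

theorem akElemSym_zero (r : ℕ) : akElemSym L r 0 = 1 := by
  simp [akElemSym]

theorem akElemSym_succ_succ (n j : ℕ) :
    akElemSym L (n + 1) (j + 1) = akElemSym L n (j + 1) + akElemSym L n j * L (n + 1) := by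
  have hn : n + 1 ∉ Finset.Icc 1 n := by simp
  have hIcc : Finset.Icc 1 (n + 1) = insert (n + 1) (Finset.Icc 1 n) := by
    ext k; simp only [Finset.mem_Icc, Finset.mem_insert]; omega
  have hsub : ∀ t ∈ Finset.powersetCard j (Finset.Icc 1 n), n + 1 ∉ t :=
    fun t ht hnt => hn ((Finset.mem_powersetCard.mp ht).1 hnt)
  rw [akElemSym, hIcc, Finset.powersetCard_succ_insert hn, Finset.sum_union, Finset.sum_image,
    akElemSym, akElemSym, Finset.sum_mul]
  · congr 1
    refine Finset.sum_congr rfl fun t ht => ?_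
    have hle : ∀ b ∈ t, b ≤ n + 1 := fun b hb =>
      (Finset.mem_Icc.mp ((Finset.mem_powersetCard.mp ht).1 hb)).2.trans n.le_succ
    simp [Finset.sort_insert_eq_append_of_forall_le hle (hsub t ht)]
  · intro a ha b hb hab
    simpa [hsub a ha, hsub b hb] using congrArg (Finset.erase · (n + 1)) hab
  · refine Finset.disjoint_left.mpr fun a ha hb => ?_
    obtain ⟨t, -, rfl⟩ := Finset.mem_image.mp hb
    exact hn ((Finset.mem_powersetCard.mp ha).1 (Finset.mem_insert_self _ _))

theorem akElemSym_add_two_add_two (n j : ℕ) :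
    akElemSym L (n + 2) (j + 2) = akElemSym L n (j + 2)
      + akElemSym L n (j + 1) * (L (n + 1) + L (n + 2))
      + akElemSym L n j * (L (n + 1) * L (n + 2)) := by
  rw [akElemSym_succ_succ L (n + 1), akElemSym_succ_succ L n, akElemSym_succ_succ L n j]
  noncomm_ring

theorem akElemSym_add_two_one (n : ℕ) :
    akElemSym L (n + 2) 1 = akElemSym L n 1 + (L (n + 1) + L (n + 2)) := by
  rw [akElemSym_succ_succ L (n + 1), akElemSym_succ_succ L n, akElemSym_zero, akElemSym_zero]
  noncomm_ring

variable {L} {t : H}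

theorem commute_akElemSym_of_forall {n : ℕ} (hL : ∀ k ∈ Finset.Icc 1 n, Commute t (L k))
    (j : ℕ) : Commute t (akElemSym L n j) :=
  Commute.sum_right _ _ _ fun s hs => Commute.list_prod_right _ _ fun x hx => by
    obtain ⟨k, hk, rfl⟩ := List.mem_map.mp hx
    exact hL k ((Finset.mem_powersetCard.mp hs).1 ((Finset.mem_sort _).mp hk))

theorem commute_akElemSym_succ {n : ℕ} (hn : ∀ j, Commute t (akElemSym L n j))
    (hL : Commute t (L (n + 1))) : ∀ j, Commute t (akElemSym L (n + 1) j)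
  | 0 => by simpa only [akElemSym_zero] using Commute.one_right t
  | j + 1 => by
    rw [akElemSym_succ_succ]
    exact (hn (j + 1)).add_right ((hn j).mul_right hL)

theorem commute_akElemSym_add_two {n : ℕ} (hn : ∀ j, Commute t (akElemSym L n j))
    (hsum : Commute t (L (n + 1) + L (n + 2))) (hprod : Commute t (L (n + 1) * L (n + 2))) :
    ∀ j, Commute t (akElemSym L (n + 2) j)
  | 0 => by simpa only [akElemSym_zero] using Commute.one_right t
  | 1 => by
    rw [akElemSym_add_two_one]
    exact (hn 1).add_right hsum
  | j + 2 => by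
    rw [akElemSym_add_two_add_two]
    exact ((hn _).add_right ((hn _).mul_right hsum)).add_right ((hn _).mul_right hprod)

theorem commute_akElemSym_of_commute_adjacent {r i : ℕ} (hi : 1 ≤ i) (hir : i + 1 ≤ r)
    (hL : ∀ k ∈ Finset.Icc 1 r, k ≠ i → k ≠ i + 1 → Commute t (L k))
    (hsum : Commute t (L i + L (i + 1))) (hprod : Commute t (L i * L (i + 1))) (j : ℕ) :
    Commute t (akElemSym L r j) := by
  obtain ⟨n, rfl⟩ : ∃ n, i = n + 1 := ⟨i - 1, by omega⟩
  have below : ∀ j, Commute t (akElemSym L n j) :=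
    commute_akElemSym_of_forall fun k hk => by
      simp only [Finset.mem_Icc] at hk
      exact hL k (Finset.mem_Icc.mpr ⟨hk.1, by omega⟩) (by omega) (by omega)
  have upTo : ∀ m, n + 2 ≤ m → m ≤ r → ∀ j, Commute t (akElemSym L m j) := by
    intro m hm
    induction m, hm using Nat.le_induction with
    | base => exact fun _ => commute_akElemSym_add_two below hsum hprod
    | succ m hm ih =>
      exact fun hmr => commute_akElemSym_succ (ih (by omega))
        (hL _ (Finset.mem_Icc.mpr ⟨by omega, hmr⟩) (by omega) (by omega))
  exact upTo r hir le_rfl j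

end ElementarySymmetric

section Hecke

variable {R H : Type} [CommRing R] [Ring H] [Algebra R H] {q : R} {T a b : H}

theorem mul_self_eq_of_quadratic (hquad : (T + 1) * (T - algebraMap R H q) = 0) :
    T * T = (algebraMap R H q - 1) * T + algebraMap R H q := by
  calc T * T = (T + 1) * (T - algebraMap R H q)
        + (T * algebraMap R H q - T + algebraMap R H q) := by noncomm_ring
    _ = _ := by rw [hquad, ← Algebra.commutes]; noncomm_ring

theorem mul_eq_add_mul_of_sandwich (hq : IsUnit q)
    (hquad : (T + 1) * (T - algebraMap R H q) = 0) (hTaT : T * a * T = algebraMap R H q * b) :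
    T * b = (algebraMap R H q - 1) * b + a * T := by
  set Q := algebraMap R H q
  refine (hq.map (algebraMap R H)).mul_left_cancel ?_
  calc Q * (T * b) = T * (Q * b) := by rw [← mul_assoc, ← mul_assoc, Algebra.commutes]
    _ = T * T * a * T := by rw [← hTaT]; noncomm_ring
    _ = (Q - 1) * (T * a * T) + Q * (a * T) := by
      rw [mul_self_eq_of_quadratic hquad]; noncomm_ring
    _ = Q * ((Q - 1) * b + a * T) := by rw [hTaT]; noncomm_ring

theorem mul_eq_mul_sub_of_sandwich (hq : IsUnit q)
    (hquad : (T + 1) * (T - algebraMap R H q) = 0) (hTaT : T * a * T = algebraMap R H q * b) :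
    T * a = b * T - (algebraMap R H q - 1) * b := by
  set Q := algebraMap R H q
  have hQ : ∀ x, Q * x = x * Q := Algebra.commutes q
  refine eq_sub_of_add_eq ((hq.map (algebraMap R H)).mul_left_cancel ?_)
  calc Q * (T * a + (Q - 1) * b) = T * a * Q + (Q - 1) * (T * a * T) := by
        rw [hTaT, mul_add, hQ (T * a)]; noncomm_ring
    _ = T * a * Q + T * a * Q * T - T * a * T := by rw [← hQ (T * a)]; noncomm_ring
    _ = T * a * (T * T) := by rw [mul_self_eq_of_quadratic hquad]; noncomm_ring
    _ = Q * (b * T) := by rw [← mul_assoc, hTaT, mul_assoc]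

theorem commute_add_of_sandwich (hq : IsUnit q)
    (hquad : (T + 1) * (T - algebraMap R H q) = 0) (hTaT : T * a * T = algebraMap R H q * b) :
    Commute T (a + b) := by
  rw [commute_iff_eq, mul_add, add_mul, mul_eq_add_mul_of_sandwich hq hquad hTaT,
    mul_eq_mul_sub_of_sandwich hq hquad hTaT]
  abel

theorem commute_mul_of_sandwich (hq : IsUnit q)
    (hquad : (T + 1) * (T - algebraMap R H q) = 0) (hTaT : T * a * T = algebraMap R H q * b)
    (hab : Commute a b) : Commute T (a * b) := by
  set Q := algebraMap R H q
  calc T * (a * b) = b * (T * b) - (Q - 1) * b * b := by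
        rw [← mul_assoc, mul_eq_mul_sub_of_sandwich hq hquad hTaT]; noncomm_ring
    _ = b * a * T + (b * Q - Q * b) * b := by
        rw [mul_eq_add_mul_of_sandwich hq hquad hTaT]; noncomm_ring
    _ = a * b * T := by rw [Algebra.commutes q b, hab.eq]; noncomm_ring

end Hecke

theorem ariki_koike_elemSym_comm_T_general
    (R : Type) [CommRing R] (q : R) (hq : IsUnit q) (r : ℕ)
    (H : Type) [Ring H] [Algebra R H]
    (T L : ℕ → H)
    (hquad : ∀ i, 1 ≤ i → i ≤ r - 1 → (T i + 1) * (T i - algebraMap R H q) = 0)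
    (hLL : ∀ i j, 1 ≤ i → i ≤ r → 1 ≤ j → j ≤ r → L i * L j = L j * L i)
    (hTLT : ∀ i, 1 ≤ i → i ≤ r - 1 → T i * L i * T i = algebraMap R H q * L (i + 1))
    (hLT : ∀ i j, 1 ≤ i → i ≤ r - 1 → 1 ≤ j → j ≤ r → j ≠ i → j ≠ i + 1 →
      L j * T i = T i * L j) :
    ∀ i j, 1 ≤ i → i ≤ r - 1 → 1 ≤ j → j ≤ r →
      T i * akElemSym L r j = akElemSym L r j * T i := by
  intro i j hi hir _ _
  have hquad_i := hquad i hi hir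
  have hTLT_i := hTLT i hi hir
  refine (commute_akElemSym_of_commute_adjacent hi (by omega) (fun k hk hki hki' => ?_)
    (commute_add_of_sandwich hq hquad_i hTLT_i)
    (commute_mul_of_sandwich hq hquad_i hTLT_i
      (hLL i (i + 1) hi (by omega) (by omega) (by omega))) j).eq
  obtain ⟨hk1, hkr⟩ := Finset.mem_Icc.mp hk
  exact (hLT i k hi hir hk1 hkr hki hki').symm

/-- In the Ariki–Koike algebra `H_u(r)`, each elementary symmetric
polynomial `σ_j` in the Jucys–Murphy elements `L_1,…,L_r` commutes with every
generator `T_i` (`1 ≤ i ≤ r−1`). -/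
theorem ariki_koike_elemSym_comm_T
    (R : Type) [CommRing R] (q : R) (hq : IsUnit q) (m r : ℕ) (hm : 0 < m)
    (u : Fin m → R)
    (H : Type) [Ring H] [Algebra R H]
    (T L : ℕ → H)
    (hquad : ∀ i, 1 ≤ i → i ≤ r - 1 → (T i + 1) * (T i - algebraMap R H q) = 0)
    (hbraid : ∀ i, 1 ≤ i → i + 1 ≤ r - 1 → T i * T (i + 1) * T i = T (i + 1) * T i * T (i + 1))
    (hTT : ∀ i j, 1 ≤ i → j ≤ r - 1 → i + 1 < j → T i * T j = T j * T i)
    (hLL : ∀ i j, 1 ≤ i → i ≤ r → 1 ≤ j → j ≤ r → L i * L j = L j * L i)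
    (hcyclo : (List.ofFn (fun k : Fin m => L 1 - algebraMap R H (u k))).prod = 0)
    (hTLT : ∀ i, 1 ≤ i → i ≤ r - 1 → T i * L i * T i = algebraMap R H q * L (i + 1))
    (hLT : ∀ i j, 1 ≤ i → i ≤ r - 1 → 1 ≤ j → j ≤ r → j ≠ i → j ≠ i + 1 →
      L j * T i = T i * L j) :
    ∀ i j, 1 ≤ i → i ≤ r - 1 → 1 ≤ j → j ≤ r →
      T i * akElemSym L r j = akElemSym L r j * T i :=
  ariki_koike_elemSym_comm_T_general R q hq r H T L hquad hLL hTLT hLT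
end

section
/- The centraliser algebra S_u(1,r) = End_{H_u(r)}(x_{(r)}H_u(r)) is a commutative R-algebra. -/
/-- The monomial `L^b` with exponent vector `b ∈ {0,…,m−1}^r`. -/
def akLmonF {H : Type} [Ring H] (L : ℕ → H) {r m : ℕ} (b : Fin r → Fin m) : H :=
  (List.ofFn (fun j : Fin r => L ((j : ℕ) + 1) ^ ((b j : ℕ)))).prod

/-- Coxeter length (number of inversions) of a permutation. -/
def permLen {r : ℕ} (w : Equiv.Perm (Fin r)) : ℕ :=
  (Finset.univ.filter (fun p : Fin r × Fin r => p.1 < p.2 ∧ w p.2 < w p.1)).card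

/-!
Pairing each `w` with `w s_i` in `x_{(r)} = Σ_w T_w` and using the quadratic relation gives
`x_{(r)} T_i = q x_{(r)}`, hence `x_{(r)} T_w = q^{ℓ(w)} x_{(r)}` along reduced words. By the
basis theorem every element of `x_{(r)} H_u(r)` is therefore `x_{(r)} a` with `a` in the
commutative subalgebra generated by the Jucys–Murphy elements. An endomorphism `f` of the cyclic
module is determined by `f(x_{(r)}) = x_{(r)} a`, and if `g(x_{(r)}) = x_{(r)} b` then `f ∘ g` and
`g ∘ f` send `x_{(r)}` to `x_{(r)} a b = x_{(r)} b a`.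
-/

open Equiv Finset

theorem Equiv.Perm.eq_one_of_strictMono {α : Type*} [LinearOrder α] [WellFoundedLT α]
    {w : Perm α} (hw : StrictMono w) : w = 1 :=
  Equiv.ext fun p => DFunLike.congr_fun
    (Subsingleton.elim (⟨w, hw.le_iff_le⟩ : α ≃o α) (OrderIso.refl α)) p

theorem exists_adjacent_descent {r : ℕ} {w : Perm (Fin r)} (hw : w ≠ 1) :
    ∃ i, ∃ hi : i + 1 < r, w ⟨i + 1, hi⟩ < w ⟨i, Nat.lt_of_succ_lt hi⟩ := by
  contrapose! hw
  obtain _ | n := r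
  · exact Subsingleton.elim _ _
  refine Perm.eq_one_of_strictMono (Fin.strictMono_iff_lt_succ.mpr fun i => ?_)
  exact (hw i (by simp)).lt_of_ne (w.injective.ne (Fin.castSucc_lt_succ (i := i)).ne)

theorem permLen_one {r : ℕ} : permLen (1 : Perm (Fin r)) = 0 := by
  rw [permLen, card_eq_zero, filter_eq_empty_iff]
  exact fun p _ h => h.1.not_gt h.2

/-- The simple reflection `s_{i+1}`: positions in `Fin r` are `0`-indexed. -/
def adjSwap {r : ℕ} (i : ℕ) (hi : i + 1 < r) : Perm (Fin r) :=
  swap ⟨i, Nat.lt_of_succ_lt hi⟩ ⟨i + 1, hi⟩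

section AdjacentTransposition

variable {r i : ℕ} (hi : i + 1 < r)

theorem adjSwap_lt_adjSwap_iff (p₁ p₂ : Fin r) :
    adjSwap i hi p₁ < adjSwap i hi p₂ ↔
      p₁ < p₂ ∧ ¬(p₁.1 = i ∧ p₂.1 = i + 1) ∨ p₁.1 = i + 1 ∧ p₂.1 = i := by
  simp only [adjSwap, swap_apply_def, Fin.lt_def, Fin.ext_iff]
  split_ifs <;> simp_all <;> omega

theorem permLen_mul_adjSwap {w : Perm (Fin r)}
    (hw : w ⟨i, Nat.lt_of_succ_lt hi⟩ < w ⟨i + 1, hi⟩) :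
    permLen (w * adjSwap i hi) = permLen w + 1 := by
  set s := adjSwap i hi
  have hs : ∀ p, s (s p) = p := swap_apply_self _ _
  have hreindex : permLen (w * s) =
      #(univ.filter fun p : Fin r × Fin r => s p.1 < s p.2 ∧ w p.2 < w p.1) :=
    card_equiv (s.prodCongr s) fun p => by
      rw [mem_filter, mem_filter]
      simp only [mem_univ, true_and, Perm.mul_apply, prodCongr_apply, Prod.map_fst,
        Prod.map_snd, hs]
  have hnew : (univ.filter fun p : Fin r × Fin r => s p.1 < s p.2 ∧ w p.2 < w p.1) =
      insert (⟨i + 1, hi⟩, ⟨i, Nat.lt_of_succ_lt hi⟩)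
        (univ.filter fun p : Fin r × Fin r => p.1 < p.2 ∧ w p.2 < w p.1) := by
    ext ⟨p₁, p₂⟩
    simp only [mem_filter, mem_univ, true_and, mem_insert, Prod.mk.injEq, s,
      adjSwap_lt_adjSwap_iff, Fin.ext_iff]
    constructor
    · rintro ⟨⟨hlt, -⟩ | hba, hinv⟩
      · exact Or.inr ⟨hlt, hinv⟩
      · exact Or.inl hba
    · rintro (⟨h₁, h₂⟩ | ⟨hlt, hinv⟩)
      · obtain ⟨rfl, rfl⟩ : p₁ = ⟨i + 1, hi⟩ ∧ p₂ = ⟨i, Nat.lt_of_succ_lt hi⟩ :=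
          ⟨Fin.ext h₁, Fin.ext h₂⟩
        exact ⟨Or.inr ⟨h₁, h₂⟩, hw⟩
      · refine ⟨Or.inl ⟨hlt, ?_⟩, hinv⟩
        rintro ⟨h₁, h₂⟩
        obtain ⟨rfl, rfl⟩ : p₁ = ⟨i, Nat.lt_of_succ_lt hi⟩ ∧ p₂ = ⟨i + 1, hi⟩ :=
          ⟨Fin.ext h₁, Fin.ext h₂⟩
        exact hinv.not_gt hw
  rw [hreindex, hnew, card_insert_of_notMem]
  · rfl
  · exact fun h => (mem_filter.mp h).2.1.not_gt (Fin.lt_def.mpr (Nat.lt_succ_self i))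

theorem permLen_adjSwap : permLen (adjSwap i hi) = 1 := by
  simpa [permLen_one] using permLen_mul_adjSwap hi (w := 1) (Fin.lt_def.mpr (Nat.lt_succ_self i))

end AdjacentTransposition

theorem sum_perm_eq_sum_filter_add_mul_swap {α M : Type*} [Fintype α] [LinearOrder α]
    [AddCommMonoid M] {a b : α} (hab : a ≠ b) (F : Perm α → M) :
    ∑ w, F w =
      ∑ w ∈ univ.filter (fun w : Perm α => w a < w b), (F w + F (w * swap a b)) := by
  rw [sum_add_distrib, ← sum_filter_add_sum_filter_not univ (fun w : Perm α => w a < w b) F]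
  congr 1
  refine (sum_nbij' (· * swap a b) (· * swap a b) (fun w hw => ?_) (fun w hw => ?_)
    (fun w _ => by simp [mul_assoc]) (fun w _ => by simp [mul_assoc]) fun w _ => rfl).symm
  · simp only [mem_filter, mem_univ, true_and, Perm.mul_apply, swap_apply_left,
      swap_apply_right] at hw ⊢
    exact hw.not_gt
  · simp only [mem_filter, mem_univ, true_and, Perm.mul_apply, swap_apply_left,
      swap_apply_right, not_lt] at hw ⊢
    exact hw.lt_of_ne' (w.injective.ne hab)

section Quadratic

variable {R H : Type*} [CommRing R] [Ring H] [Algebra R H] {q : R} {t : H}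

theorem add_mul_mul_eq_algebraMap_mul_of_quadratic
    (ht : (t + 1) * (t - algebraMap R H q) = 0) (y : H) :
    (y + y * t) * t = algebraMap R H q * (y + y * t) := by
  have hsq : t * t + t = algebraMap R H q * (1 + t) := by
    rw [← sub_eq_zero, ← ht, mul_add, mul_one, Algebra.commutes]
    noncomm_ring
  calc (y + y * t) * t = y * (t * t + t) := by noncomm_ring
    _ = algebraMap R H q * (y + y * t) := by
      rw [hsq, ← mul_assoc, ← Algebra.commutes, mul_assoc, mul_add, mul_one]

theorem sum_mul_eq_algebraMap_mul_sum_of_quadratic {α : Type*} [Fintype α] [LinearOrder α]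
    {Tw : Perm α → H} {a b : α} (hab : a ≠ b) (ht : (t + 1) * (t - algebraMap R H q) = 0)
    (hTw : ∀ w : Perm α, w a < w b → Tw (w * swap a b) = Tw w * t) :
    (∑ w, Tw w) * t = algebraMap R H q * ∑ w, Tw w := by
  rw [sum_perm_eq_sum_filter_add_mul_swap hab, sum_mul, mul_sum]
  refine sum_congr rfl fun w hw => ?_
  rw [hTw w (mem_filter.mp hw).2, add_mul_mul_eq_algebraMap_mul_of_quadratic ht]

end Quadratic

section LengthAdditive

variable {M : Type*} [Monoid M] {r : ℕ} {Tw : Perm (Fin r) → M}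

theorem map_mul_adjSwap_of_lt
    (hTwmul : ∀ w w', permLen (w * w') = permLen w + permLen w' → Tw (w * w') = Tw w * Tw w')
    {i : ℕ} (hi : i + 1 < r) {w : Perm (Fin r)}
    (hw : w ⟨i, Nat.lt_of_succ_lt hi⟩ < w ⟨i + 1, hi⟩) :
    Tw (w * adjSwap i hi) = Tw w * Tw (adjSwap i hi) :=
  hTwmul _ _ (by rw [permLen_mul_adjSwap hi hw, permLen_adjSwap])

theorem mul_map_eq_pow_permLen_mul (hTw1 : Tw 1 = 1)
    (hTwmul : ∀ w w', permLen (w * w') = permLen w + permLen w' → Tw (w * w') = Tw w * Tw w')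
    {c x : M} (hx : ∀ i (hi : i + 1 < r), x * Tw (adjSwap i hi) = c * x) (w : Perm (Fin r)) :
    x * Tw w = c ^ permLen w * x := by
  by_cases hw : w = 1
  · rw [hw, hTw1, permLen_one, pow_zero, mul_one, one_mul]
  obtain ⟨i, hi, hdesc⟩ := exists_adjacent_descent hw
  obtain ⟨w', rfl⟩ : ∃ w', w' * adjSwap i hi = w :=
    ⟨w * adjSwap i hi, by simp [adjSwap, mul_assoc]⟩
  have hasc : w' ⟨i, Nat.lt_of_succ_lt hi⟩ < w' ⟨i + 1, hi⟩ := by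
    simpa [adjSwap, Fin.ext_iff] using hdesc
  rw [map_mul_adjSwap_of_lt hTwmul hi hasc, permLen_mul_adjSwap hi hasc, ← mul_assoc,
    mul_map_eq_pow_permLen_mul hTw1 hTwmul hx w', mul_assoc, hx, ← mul_assoc, ← pow_succ]
termination_by permLen w
decreasing_by subst w; rw [permLen_mul_adjSwap hi hasc]; omega

end LengthAdditive

theorem Module.End.commute_of_apply_eq_smul {S M : Type*} [Semiring S] [AddCommMonoid M]
    [Module S M]
    {X : M} (hX : Submodule.span S {X} = ⊤) {f g : Module.End S M} {a b : S}
    (hf : f X = a • X) (hg : g X = b • X) (hab : Commute a b) : Commute f g :=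
  LinearMap.ext_on hX (by
    rintro _ rfl
    simp only [Module.End.mul_apply, hf, hg, map_smul, smul_smul, hab.eq])

theorem Submodule.exists_mul_eq_mul_mem_of_span_eq_top {R H : Type*} [CommSemiring R]
    [Semiring H] [Algebra R H] {x : H} {A : Submodule R H} {G : Set H}
    (hG : Submodule.span R G = ⊤) (hxG : ∀ g ∈ G, ∃ a ∈ A, x * g = x * a) (h : H) :
    ∃ a ∈ A, x * h = x * a := by
  have hle :
      Submodule.span R G ≤ (A.map (LinearMap.mulLeft R x)).comap (LinearMap.mulLeft R x) :=
    Submodule.span_le.mpr fun g hg => by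
      obtain ⟨a, ha, hxa⟩ := hxG g hg
      exact ⟨a, ha, hxa.symm⟩
  obtain ⟨a, ha, hxa⟩ := hle (hG ▸ Submodule.mem_top : h ∈ Submodule.span R G)
  exact ⟨a, ha, hxa.symm⟩

theorem mul_comm_of_forall_mul_eq_mul_mem {H : Type*} [Semiring H] {x : H} {A : Set H}
    (hA : ∀ a ∈ A, ∀ b ∈ A, Commute a b) (hx : ∀ h, ∃ a ∈ A, x * h = x * a)
    (f g : Module.End Hᵐᵒᵖ (Submodule.span Hᵐᵒᵖ {x})) : f * g = g * f := by
  set X : Submodule.span Hᵐᵒᵖ {x} := ⟨x, Submodule.mem_span_singleton_self x⟩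
  have hgen : ∀ e : Module.End Hᵐᵒᵖ (Submodule.span Hᵐᵒᵖ {x}), ∃ a ∈ A,
      e X = MulOpposite.op a • X := by
    intro e
    obtain ⟨h, he⟩ := Submodule.mem_span_singleton.mp (e X).2
    obtain ⟨a, ha, hxa⟩ := hx h.unop
    exact ⟨a, ha, Subtype.ext (by simpa [X, ← he, MulOpposite.smul_eq_mul_unop] using hxa)⟩
  obtain ⟨a, ha, hfa⟩ := hgen f
  obtain ⟨b, hb, hgb⟩ := hgen g
  have hXgen : Submodule.span Hᵐᵒᵖ {X} = ⊤ :=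
    (Submodule.span_singleton_eq_top_iff _ _).mpr fun v => by
      obtain ⟨h, hv⟩ := Submodule.mem_span_singleton.mp v.2
      exact ⟨h, Subtype.ext hv⟩
  exact Module.End.commute_of_apply_eq_smul hXgen hfa hgb (hA a ha b hb).op

theorem Algebra.commute_of_mem_adjoin_of_commute {R A : Type*} [CommSemiring R] [Semiring A]
    [Algebra R A]
    {s : Set A} (hs : ∀ a ∈ s, ∀ b ∈ s, Commute a b) {a b : A}
    (ha : a ∈ Algebra.adjoin R s) (hb : b ∈ Algebra.adjoin R s) : Commute a b :=
  Algebra.commute_of_mem_adjoin_of_forall_mem_commute hb fun b' hb' =>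
    (Algebra.commute_of_mem_adjoin_of_forall_mem_commute ha fun a' ha' => hs b' hb' a' ha').symm

theorem akLmonF_mem_adjoin {R : Type*} {H : Type} [CommSemiring R] [Ring H] [Algebra R H]
    (L : ℕ → H) {r m : ℕ} (b : Fin r → Fin m) :
    akLmonF L b ∈ Algebra.adjoin R (Set.range fun j : Fin r => L (j + 1)) :=
  Subalgebra.list_prod_mem _ fun y hy => by
    obtain ⟨j, rfl⟩ := List.mem_ofFn.mp hy
    exact pow_mem (Algebra.subset_adjoin (Set.mem_range_self j)) _

/-- The centraliser algebra `S_u(1,r) = End_{H_u(r)}(x_{(r)}H_u(r))`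
(endomorphisms of the right `H_u(r)`-module `x_{(r)}H_u(r)`, viewed as a left module
over the opposite ring) is commutative. -/
theorem slim_schur_1_r_commutative
    (R : Type) [CommRing R] (q : R) (m r : ℕ)
    (H : Type) [Ring H] [Algebra R H]
    (T L : ℕ → H)
    (hquad : ∀ i, 1 ≤ i → i ≤ r - 1 → (T i + 1) * (T i - algebraMap R H q) = 0)
    (hLL : ∀ i j, 1 ≤ i → i ≤ r → 1 ≤ j → j ≤ r → L i * L j = L j * L i)
    (Tw : Equiv.Perm (Fin r) → H)
    (hTw1 : Tw 1 = 1)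
    (hTwmul : ∀ w w' : Equiv.Perm (Fin r), permLen (w * w') = permLen w + permLen w' →
      Tw (w * w') = Tw w * Tw w')
    (hTwgen : ∀ (i : ℕ) (h1 : 1 ≤ i) (h2 : i < r),
      Tw (Equiv.swap ⟨i - 1, by omega⟩ ⟨i, h2⟩) = T i)
    (hSpan : ⊤ ≤ Submodule.span R
      (Set.range fun p : Equiv.Perm (Fin r) × (Fin r → Fin m) => Tw p.1 * akLmonF L p.2))
    -- `x_{(r)} = Σ_{w ∈ S_r} T_w`
    (x : H) (hx : x = ∑ w : Equiv.Perm (Fin r), Tw w) :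
    -- `x_{(r)}H_u(r)` is the cyclic right module generated by `x_{(r)}`, i.e. the span
    -- of `{x_{(r)}}` over the opposite ring `H_u(r)ᵐᵒᵖ`; its endomorphism algebra is
    -- commutative
    ∀ f g : Module.End Hᵐᵒᵖ ↥(Submodule.span Hᵐᵒᵖ ({x} : Set H)), f * g = g * f := by
  have hxT : ∀ i (hi : i + 1 < r), x * Tw (adjSwap i hi) = algebraMap R H q * x := by
    intro i hi
    have hTs : Tw (adjSwap i hi) = T (i + 1) := hTwgen (i + 1) (by omega) hi
    rw [hTs, hx]
    exact sum_mul_eq_algebraMap_mul_sum_of_quadratic (by simp [Fin.ext_iff])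
      (hquad (i + 1) (by omega) (by omega))
      fun w hw => hTs ▸ map_mul_adjSwap_of_lt hTwmul hi hw
  intro f g
  set S := Set.range fun j : Fin r => L (j + 1)
  have hLcomm : ∀ a ∈ S, ∀ b ∈ S, Commute a b := by
    rintro _ ⟨j, rfl⟩ _ ⟨k, rfl⟩
    exact hLL _ _ (by omega) j.2 (by omega) k.2
  refine mul_comm_of_forall_mul_eq_mul_mem
    (fun a ha b hb => Algebra.commute_of_mem_adjoin_of_commute (R := R) hLcomm ha hb)
    (Submodule.exists_mul_eq_mul_mem_of_span_eq_top
      (A := Subalgebra.toSubmodule (Algebra.adjoin R S)) (top_unique hSpan) ?_) f g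
  rintro _ ⟨⟨w, b⟩, rfl⟩
  refine ⟨q ^ permLen w • akLmonF L b, Subalgebra.smul_mem _ (akLmonF_mem_adjoin L b) _, ?_⟩
  rw [← mul_assoc, mul_map_eq_pow_permLen_mul hTw1 hTwmul hxT, ← map_pow, Algebra.smul_def,
    ← mul_assoc, Algebra.commutes]
end

section
/- In the type B Weyl group W = S_{2,r}, for 1 ≤ i ≤ r one has d_i^{−1} S_r d_i ∩ S_r = S_{{1,…,i}} × S_{{i+1,…,r}}, the Young subgroup of S_r generated by {s_1,…,s_{i−1}, s_{i+1},…,s_{r−1}}, and d_0^{−1} S_r d_0 ∩ S_r = S_r. -/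
/-!
The inclusion `⊇` comes from the conjugation formulas `d_i⁻¹ s_j d_i = s_{i-j}` (`j < i`) and
`d_i⁻¹ s_j d_i = s_j` (`j > i`), which follow from the Coxeter relations alone.

For `⊆`, let `W` act on signed permutations of the positions `0, 1, …` (`s_0` negates position
`0`, `s_j` swaps positions `j - 1` and `j`). Then `S_r` preserves signs while `d_i` reverses and
negates the first `i` positions, so if `x ∈ S_r` and `d_i x d_i⁻¹ ∈ S_r` then `x` maps
`{0, …, i - 1}` into itself. Every `x ∈ ⟨s_1, …, s_{m+1}⟩` is `u · s_{m+1} s_m ⋯ s_{b+1}` with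
`u ∈ ⟨s_1, …, s_m⟩`; the right factor moves position `b` to `m + 1`, which `u` fixes, so the
block condition forces `b ≥ i`. Then the right factor lies in the Young subgroup, `u` again
satisfies the block condition, and induction on `m` concludes.
-/

open Equiv Subgroup Set

section Involutions

variable {G : Type*} [Group G] {x y : G}

theorem mul_pow_two_eq_one_iff_of_mul_self (hx : x * x = 1) (hy : y * y = 1) :
    (x * y) ^ 2 = 1 ↔ Commute x y := by
  rw [commute_iff_eq, pow_two, mul_eq_one_iff_eq_inv, mul_inv_rev, inv_eq_of_mul_eq_one_right hx,
    inv_eq_of_mul_eq_one_right hy]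

theorem mul_pow_three_eq_one_iff_of_mul_self (hx : x * x = 1) (hy : y * y = 1) :
    (x * y) ^ 3 = 1 ↔ x * y * x = y * x * y := by
  rw [show (x * y) ^ 3 = x * y * x * (y * x * y) by
    simp only [pow_succ, pow_zero, one_mul, mul_assoc], mul_eq_one_iff_eq_inv]
  simp only [mul_inv_rev, inv_eq_of_mul_eq_one_right hx, inv_eq_of_mul_eq_one_right hy, mul_assoc]

theorem mul_pow_four_eq_one_iff_of_mul_self (hx : x * x = 1) (hy : y * y = 1) :
    (x * y) ^ 4 = 1 ↔ x * y * x * y = y * x * y * x := by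
  rw [show (x * y) ^ 4 = x * y * x * y * (x * y * x * y) by
    simp only [pow_succ, pow_zero, one_mul, mul_assoc], mul_eq_one_iff_eq_inv]
  simp only [mul_inv_rev, inv_eq_of_mul_eq_one_right hx, inv_eq_of_mul_eq_one_right hy, mul_assoc]

end Involutions

namespace TypeB

variable {G : Type*} [Group G] {r : ℕ} {s : ℕ → G}

structure Relations (r : ℕ) (s : ℕ → G) : Prop where
  mul_self : ∀ a < r, s a * s a = 1
  comm : ∀ a b, b + 2 ≤ a → a < r → Commute (s a) (s b)
  braid : ∀ a, 1 ≤ a → a + 1 < r → s a * s (a + 1) * s a = s (a + 1) * s a * s (a + 1)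
  four : 1 < r → s 0 * s 1 * s 0 * s 1 = s 1 * s 0 * s 1 * s 0

def entry (i j : ℕ) : ℕ :=
  if i = j then 1
  else if (i = 0 ∧ j = 1) ∨ (j = 0 ∧ i = 1) then 4
  else if i + 1 = j ∨ j + 1 = i then 3 else 2

theorem relations_of_coxeterSystem {M : CoxeterMatrix (Fin r)}
    (hM : ∀ i j : Fin r, M i j = entry i j) (cs : CoxeterSystem M G)
    (hs : ∀ i (h : i < r), s i = cs.simple ⟨i, h⟩) : Relations r s := by
  have mul_self : ∀ a < r, s a * s a = 1 := fun a ha => by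
    rw [hs a ha]; exact cs.simple_mul_simple_self _
  have pow_entry : ∀ a b (ha : a < r) (hb : b < r), (s a * s b) ^ entry a b = 1 := by
    intro a b ha hb
    rw [hs a ha, hs b hb, show entry a b = M ⟨a, ha⟩ ⟨b, hb⟩ from (hM ⟨a, ha⟩ ⟨b, hb⟩).symm]
    exact cs.simple_mul_simple_pow _ _
  refine ⟨mul_self, fun a b hab ha => ?_, fun a ha ha' => ?_, fun hr => ?_⟩
  · rw [← mul_pow_two_eq_one_iff_of_mul_self (mul_self a ha) (mul_self b (by omega))]
    convert pow_entry a b ha (by omega)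
    simp only [entry]; split_ifs <;> omega
  · rw [← mul_pow_three_eq_one_iff_of_mul_self (mul_self a (by omega)) (mul_self (a + 1) ha')]
    simpa [entry, show a ≠ 0 by omega] using pow_entry a (a + 1) (by omega) ha'
  · rw [← mul_pow_four_eq_one_iff_of_mul_self (mul_self 0 (by omega)) (mul_self 1 hr)]
    exact pow_entry 0 1 (by omega) hr

theorem Relations.isLiftable {M : CoxeterMatrix (Fin r)} (h : Relations r s)
    (hM : ∀ i j : Fin r, M i j = entry i j) : M.IsLiftable fun i => s i := by
  rintro ⟨i, hi⟩ ⟨j, hj⟩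
  have hfi := h.mul_self i hi
  have hfj := h.mul_self j hj
  rw [hM]
  dsimp only [entry]
  split_ifs with h1 h4 h3
  · subst h1; rw [pow_one, hfi]
  · rw [mul_pow_four_eq_one_iff_of_mul_self hfi hfj]
    rcases h4 with ⟨rfl, rfl⟩ | ⟨rfl, rfl⟩
    exacts [h.four hj, (h.four hi).symm]
  · rw [mul_pow_three_eq_one_iff_of_mul_self hfi hfj]
    rcases h3 with rfl | rfl
    exacts [h.braid i (by omega) hj, (h.braid j (by omega) hi).symm]
  · rw [mul_pow_two_eq_one_iff_of_mul_self hfi hfj]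
    rcases lt_or_gt_of_ne h1 with hij | hij
    exacts [(h.comm j i (by omega) hj).symm, h.comm i j (by omega) hi]

/-- Signed permutations of the positions `0, 1, …`: `(a, x)` is position `a` with sign `x`. -/
def signedPerm : ℕ → Perm (ℕ × Bool)
  | 0 => swap (0, true) (0, false)
  | j + 1 => prodCongr (swap j (j + 1)) (Equiv.refl Bool)

@[simp]
theorem signedPerm_zero_apply_zero (x : Bool) : signedPerm 0 (0, x) = (0, !x) := by
  cases x <;> simp [signedPerm]

@[simp]
theorem signedPerm_zero_apply_succ (a : ℕ) (x : Bool) : signedPerm 0 (a + 1, x) = (a + 1, x) := by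
  simp [signedPerm, swap_apply_of_ne_of_ne]

@[simp]
theorem signedPerm_succ_apply (j a : ℕ) (x : Bool) :
    signedPerm (j + 1) (a, x) = (swap j (j + 1) a, x) := rfl

theorem relations_signedPerm (r : ℕ) : Relations r signedPerm where
  mul_self a _ := by
    rcases a with _ | a <;> ext ⟨_ | c, x⟩ <;> simp [swap_apply_def] <;> split_ifs <;> omega
  comm a b hab _ := by
    obtain ⟨a, rfl⟩ : ∃ a', a = a' + 1 := ⟨a - 1, by omega⟩
    rcases b with _ | b
    · obtain ⟨a, rfl⟩ : ∃ a', a = a' + 1 := ⟨a - 1, by omega⟩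
      ext ⟨_ | c, x⟩ <;> simp [swap_apply_def] <;> split_ifs <;> simp_all
    · ext ⟨c, x⟩ <;> simp [swap_apply_def]
      split_ifs <;> omega
  braid a ha _ := by
    obtain ⟨a, rfl⟩ : ∃ a', a = a' + 1 := ⟨a - 1, by omega⟩
    ext ⟨c, x⟩ <;> simp [swap_apply_def]
    split_ifs <;> omega
  four _ := by
    ext ⟨_ | _ | c, x⟩ <;> simp [swap_apply_def]

/-- `ladder s b n = s (b + n - 1) * ⋯ * s (b + 1) * s b`; the paper's `τ_j` is `ladder s 0 j`. -/
def ladder (s : ℕ → G) (b : ℕ) : ℕ → G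
  | 0 => 1
  | n + 1 => s (b + n) * ladder s b n

def d (s : ℕ → G) : ℕ → G
  | 0 => 1
  | i + 1 => d s i * ladder s 0 (i + 1)

theorem ladder_succ' (s : ℕ → G) (b n : ℕ) : ladder s b (n + 1) = ladder s (b + 1) n * s b := by
  induction n with
  | zero => simp [ladder]
  | succ n ih => rw [ladder, ih, ladder, mul_assoc, Nat.add_right_comm, Nat.add_assoc]

theorem ladder_zero_eq_prod (s : ℕ → G) (j : ℕ) :
    ladder s 0 j = ((List.range j).reverse.map s).prod := by
  induction j with
  | zero => rfl
  | succ j ih => simp [ladder, List.range_succ, ih]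

theorem d_eq_prod (s : ℕ → G) (i : ℕ) :
    d s i = ((List.range i).map fun t => ladder s 0 (t + 1)).prod := by
  induction i with
  | zero => rfl
  | succ i ih => simp [d, List.range_succ, ih]

theorem ladder_mem_closure {S : Set ℕ} {b n : ℕ} (hS : ∀ k < n, b + k ∈ S) :
    ladder s b n ∈ closure (s '' S) := by
  induction n with
  | zero => exact one_mem _
  | succ n ih =>
    exact mul_mem (subset_closure ⟨_, hS n n.lt_succ_self, rfl⟩)
      (ih fun k hk => hS k (by omega))

theorem Relations.commute_ladder_of_lt (h : Relations r s) {j b n : ℕ} (hj : j + 2 ≤ b)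
    (hbn : b + n ≤ r) : Commute (s j) (ladder s b n) := by
  induction n with
  | zero => exact Commute.one_right _
  | succ n ih =>
    exact (h.comm _ _ (by omega) (by omega)).symm.mul_right (ih (by omega))

theorem Relations.commute_ladder_of_gt (h : Relations r s) {j b n : ℕ} (hj : b + n + 1 ≤ j)
    (hjr : j < r) : Commute (s j) (ladder s b n) := by
  induction n with
  | zero => exact Commute.one_right _
  | succ n ih => exact (h.comm _ _ (by omega) hjr).mul_right (ih (by omega))

theorem Relations.simple_mul_ladder (h : Relations r s) {k b n : ℕ} (hbk : b ≤ k) (hk : 1 ≤ k)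
    (hkn : k + 1 < b + n) (hbn : b + n ≤ r) : s k * ladder s b n = ladder s b n * s (k + 1) := by
  induction n with
  | zero => omega
  | succ n ih =>
    rw [ladder]
    by_cases hlt : k + 1 < b + n
    · rw [← mul_assoc, (h.comm _ _ (by omega) (by omega)).symm.eq, mul_assoc, ih hlt (by omega),
        mul_assoc]
    · obtain ⟨n, rfl⟩ : ∃ n', n = n' + 1 := ⟨n - 1, by omega⟩
      obtain rfl : k = b + n := by omega
      have hc := h.commute_ladder_of_gt (j := b + n + 1) (b := b) (n := n) le_rfl (by omega)
      rw [ladder, ← add_assoc, ← mul_assoc, ← mul_assoc, h.braid _ hk (by omega), mul_assoc,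
        mul_assoc, hc.eq]
      simp only [mul_assoc]

theorem Relations.commute_d (h : Relations r s) {i j : ℕ} (hij : i < j) (hjr : j < r) :
    Commute (s j) (d s i) := by
  induction i with
  | zero => exact Commute.one_right _
  | succ i ih => exact (ih (by omega)).mul_right (h.commute_ladder_of_gt (by omega) hjr)

theorem Relations.simple_mul_ladder_mul_ladder (h : Relations r s) {m : ℕ} (hm : 1 ≤ m)
    (hmr : m + 1 ≤ r) :
    s m * (ladder s 0 m * ladder s 0 (m + 1)) = ladder s 0 m * ladder s 0 (m + 1) * s 1 := by
  induction m, hm using Nat.le_induction with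
  | base => simpa [ladder, mul_assoc] using (h.four hmr).symm
  | succ m hm ih =>
    set τ := ladder s 0 m
    have hc : Commute (s (m + 1)) τ := h.commute_ladder_of_gt (by omega) (by omega)
    have hτ : ladder s 0 (m + 1) = s m * τ := by rw [ladder, zero_add]
    have hτ' : ladder s 0 (m + 2) = s (m + 1) * (s m * τ) := by rw [ladder, hτ, zero_add]
    rw [hτ', hτ]
    calc s (m + 1) * (s m * τ * (s (m + 1) * (s m * τ)))
        = s (m + 1) * s m * s (m + 1) * (τ * (s m * τ)) := by
          simp only [mul_assoc, hc.symm.left_comm]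
      _ = s m * s (m + 1) * (s m * (τ * (s m * τ))) := by
          rw [← h.braid m hm (by omega)]; simp only [mul_assoc]
      _ = s m * s (m + 1) * (τ * (s m * τ) * s 1) := by rw [← hτ, ih (by omega)]
      _ = s m * τ * (s (m + 1) * (s m * τ)) * s 1 := by
          simp only [mul_assoc, hc.left_comm]

theorem Relations.simple_mul_d (h : Relations r s) {i j : ℕ} (hj : 1 ≤ j) (hji : j < i)
    (hir : i ≤ r) : s j * d s i = d s i * s (i - j) := by
  induction i with
  | zero => omega
  | succ i ih =>
    rw [d]
    by_cases hji' : j < i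
    · rw [← mul_assoc, ih hji' (by omega), mul_assoc,
        h.simple_mul_ladder (by omega) (by omega) (by omega) (by omega), ← mul_assoc,
        show i - j + 1 = i + 1 - j by omega]
    · obtain rfl : j = i := by omega
      obtain ⟨i, rfl⟩ : ∃ i', j = i' + 1 := ⟨j - 1, by omega⟩
      rw [d, mul_assoc, ← mul_assoc, (h.commute_d (lt_add_one i) (by omega)).eq, mul_assoc,
        h.simple_mul_ladder_mul_ladder hj hir, Nat.add_sub_cancel_left]
      simp only [mul_assoc]

theorem Relations.exists_mul_ladder_mul_simple (h : Relations r s) {m b n j : ℕ} {u : G}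
    (hmr : m + 1 < r) (hu : u ∈ closure (s '' Icc 1 m)) (hbn : b + n = m + 1)
    (hj : j ∈ Icc 1 (m + 1)) :
    ∃ u' ∈ closure (s '' Icc 1 m), ∃ b' n', b' + n' = m + 1 ∧
      u * ladder s (b + 1) n * s j = u' * ladder s (b' + 1) n' := by
  obtain ⟨hj1, hjm⟩ := hj
  rcases lt_trichotomy j b with hjb | rfl | hbj
  · refine ⟨u * s j, mul_mem hu (subset_closure ⟨j, ⟨hj1, by omega⟩, rfl⟩), b, n, hbn, ?_⟩
    rw [mul_assoc u (s j), (h.commute_ladder_of_lt (b := b + 1) (n := n) (by omega) (by omega)).eq,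
      mul_assoc]
  · obtain ⟨b, rfl⟩ : ∃ b', j = b' + 1 := ⟨j - 1, by omega⟩
    exact ⟨u, hu, b, n + 1, by omega, by rw [ladder_succ', mul_assoc]⟩
  · by_cases hjb : j = b + 1
    · subst hjb
      obtain ⟨n, rfl⟩ : ∃ n', n = n' + 1 := ⟨n - 1, by omega⟩
      refine ⟨u, hu, b + 1, n, by omega, ?_⟩
      rw [ladder_succ', mul_assoc, mul_assoc, h.mul_self _ (by omega), mul_one]
    · refine ⟨u * s (j - 1), mul_mem hu (subset_closure ⟨j - 1, ⟨by omega, by omega⟩, rfl⟩),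
        b, n, hbn, ?_⟩
      rw [mul_assoc u (s (j - 1)), h.simple_mul_ladder (by omega) (by omega) (by omega) (by omega),
        Nat.sub_add_cancel hj1, mul_assoc]

theorem Relations.exists_eq_mul_ladder (h : Relations r s) {m : ℕ} (hmr : m + 1 < r) {x : G}
    (hx : x ∈ closure (s '' Icc 1 (m + 1))) :
    ∃ u ∈ closure (s '' Icc 1 m), ∃ b n, b + n = m + 1 ∧ x = u * ladder s (b + 1) n := by
  induction hx using closure_induction_right with
  | one => exact ⟨1, one_mem _, m + 1, 0, rfl, by rw [ladder, mul_one]⟩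
  | mul_right x _ y hy ih =>
    obtain ⟨j, hj, rfl⟩ := hy
    obtain ⟨u, hu, b, n, hbn, rfl⟩ := ih
    exact h.exists_mul_ladder_mul_simple hmr hu hbn hj
  | mul_inv_cancel x _ y hy ih =>
    obtain ⟨j, hj, rfl⟩ := hy
    obtain ⟨u, hu, b, n, hbn, rfl⟩ := ih
    rw [inv_eq_of_mul_eq_one_right (h.mul_self j (hj.2.trans_lt hmr))]
    exact h.exists_mul_ladder_mul_simple hmr hu hbn hj

section Representation

variable {φ : G →* Perm (ℕ × Bool)}

theorem apply_ladder (hφ : ∀ j < r, φ (s j) = signedPerm j) {b n : ℕ} (hbn : b + 1 + n ≤ r)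
    (a : ℕ) (x : Bool) :
    φ (ladder s (b + 1) n) (a, x) =
      (if a = b then b + n else if b < a ∧ a ≤ b + n then a - 1 else a, x) := by
  induction n with
  | zero => simp only [ladder, map_one, Perm.one_apply]; split_ifs <;> grind
  | succ n ih =>
    rw [ladder, map_mul, Perm.mul_apply, ih (by omega), show b + 1 + n = b + n + 1 by omega,
      hφ _ (by omega), signedPerm_succ_apply, Prod.mk.injEq]
    refine ⟨?_, rfl⟩
    split_ifs <;> simp only [swap_apply_def] <;> split_ifs <;> omega

theorem apply_d (hφ : ∀ j < r, φ (s j) = signedPerm j) {i : ℕ} (hir : i ≤ r) (a : ℕ)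
    (x : Bool) : φ (d s i) (a, x) = if a < i then (i - 1 - a, !x) else (a, x) := by
  induction i generalizing a x with
  | zero => simp [d]
  | succ i ih =>
    have hL := apply_ladder (b := 0) (n := i) hφ (by omega)
    simp only [zero_add] at hL
    rw [d, ladder_succ', map_mul, map_mul, Perm.mul_apply, Perm.mul_apply, hφ 0 (by omega)]
    rcases a with _ | a
    · simp [hL, ih (by omega)]
    · rw [signedPerm_zero_apply_succ, hL]
      split_ifs <;> simp_all [ih (by omega)] <;> omega

theorem snd_apply_of_mem_closure (hφ : ∀ j < r, φ (s j) = signedPerm j) {x : G}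
    (hx : x ∈ closure (s '' Icc 1 (r - 1))) (p : ℕ × Bool) : (φ x p).2 = p.2 := by
  induction hx using closure_induction generalizing p with
  | mem _ hy =>
    obtain ⟨j, ⟨hj1, hjr⟩, rfl⟩ := hy
    obtain ⟨j, rfl⟩ : ∃ j', j = j' + 1 := ⟨j - 1, by omega⟩
    rw [hφ _ (by omega), signedPerm_succ_apply]
  | one => rw [map_one, Perm.one_apply]
  | mul x y _ _ hx hy => rw [map_mul, Perm.mul_apply, hx, hy]
  | inv x _ hx => rw [← hx (φ x⁻¹ p), map_inv, Perm.coe_inv, apply_symm_apply]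

theorem apply_of_mem_closure (hφ : ∀ j < r, φ (s j) = signedPerm j) {m : ℕ} (hmr : m < r)
    {x : G} (hx : x ∈ closure (s '' Icc 1 m)) {a : ℕ} (ha : m < a) (y : Bool) :
    φ x (a, y) = (a, y) := by
  suffices closure (s '' Icc 1 m) ≤ (MulAction.stabilizer (Perm (ℕ × Bool)) (a, y)).comap φ from
    this hx
  rw [closure_le]
  rintro _ ⟨j, ⟨hj1, hjm⟩, rfl⟩
  obtain ⟨j, rfl⟩ : ∃ j', j = j' + 1 := ⟨j - 1, by omega⟩
  simp only [SetLike.mem_coe, mem_comap, MulAction.mem_stabilizer_iff, Perm.smul_def,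
    hφ _ (by omega : j + 1 < r), signedPerm_succ_apply,
    swap_apply_of_ne_of_ne (by omega : a ≠ j) (by omega : a ≠ j + 1)]

theorem apply_lt_of_conj_mem (hφ : ∀ j < r, φ (s j) = signedPerm j) {i : ℕ} (hir : i ≤ r)
    {x : G} (hx : x ∈ closure (s '' Icc 1 (r - 1)))
    (hdx : d s i * x * (d s i)⁻¹ ∈ closure (s '' Icc 1 (r - 1))) {a : ℕ} (ha : a < i) :
    (φ x (a, true)).1 < i := by
  by_contra! hc
  have hxa : φ x (a, true) = ((φ x (a, true)).1, true) :=
    Prod.ext rfl (snd_apply_of_mem_closure hφ hx _)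
  have key : φ (d s i * x * (d s i)⁻¹) (φ (d s i) (a, true)) = φ (d s i) (φ x (a, true)) := by
    rw [← Perm.mul_apply, ← map_mul, inv_mul_cancel_right, map_mul, Perm.mul_apply]
  rw [apply_d hφ hir, if_pos ha, hxa, apply_d hφ hir, if_neg hc.not_gt, Bool.not_true] at key
  have hsign := snd_apply_of_mem_closure hφ hdx (i - 1 - a, false)
  rw [key] at hsign
  simp at hsign

theorem Relations.mem_closure_diff_of_apply_lt (h : Relations r s)
    (hφ : ∀ j < r, φ (s j) = signedPerm j) {i m : ℕ} (hmr : m < r) {x : G}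
    (hx : x ∈ closure (s '' Icc 1 m)) (hblock : ∀ a < i, (φ x (a, true)).1 < i) :
    x ∈ closure (s '' (Icc 1 (r - 1) \ {i})) := by
  induction m generalizing x with
  | zero => exact closure_mono (image_mono fun j hj => by grind) hx
  | succ m ih =>
    by_cases hmi : m + 1 < i
    · exact closure_mono (image_mono fun j hj => by grind) hx
    obtain ⟨u, hu, b, n, hbn, rfl⟩ := h.exists_eq_mul_ladder hmr hx
    have hL : ∀ a < b, φ (ladder s (b + 1) n) (a, true) = (a, true) := fun a ha => by
      rw [apply_ladder hφ (by omega), if_neg ha.ne, if_neg (by omega)]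
    have hib : i ≤ b := by
      by_contra! hbi
      have := hblock b hbi
      rw [map_mul, Perm.mul_apply, apply_ladder hφ (by omega), if_pos rfl, hbn,
        apply_of_mem_closure hφ (by omega) hu (lt_add_one m)] at this
      omega
    refine mul_mem (ih (by omega) hu fun a ha => ?_) (ladder_mem_closure fun k hk => ?_)
    · simpa [hL a (by omega)] using hblock a ha
    · simp only [mem_sdiff, mem_Icc, mem_singleton_iff]
      omega

theorem Relations.map_conj_d_inf_eq (h : Relations r s) (hφ : ∀ j < r, φ (s j) = signedPerm j)
    {i : ℕ} (hi : 1 ≤ i) (hir : i ≤ r) :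
    (closure (s '' Icc 1 (r - 1))).map (MulAut.conj (d s i)⁻¹).toMonoidHom ⊓
      closure (s '' Icc 1 (r - 1)) = closure (s '' (Icc 1 (r - 1) \ {i})) := by
  apply le_antisymm
  · rintro _ ⟨⟨y, hy, rfl⟩, hx⟩
    refine h.mem_closure_diff_of_apply_lt hφ (by omega) hx fun a ha =>
      apply_lt_of_conj_mem hφ hir hx ?_ ha
    simpa [MulAut.conj_apply, mul_assoc] using hy
  · rw [closure_le]
    rintro _ ⟨j, ⟨⟨hj1, hjr⟩, hji⟩, rfl⟩
    refine ⟨?_, subset_closure ⟨j, ⟨hj1, hjr⟩, rfl⟩⟩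
    rcases lt_or_gt_of_ne hji with hji | hji
    · refine ⟨s (i - j), subset_closure ⟨i - j, ⟨by omega, by omega⟩, rfl⟩, ?_⟩
      have := h.simple_mul_d (j := i - j) (by omega) (by omega) hir
      rw [Nat.sub_sub_self hji.le] at this
      simp [mul_assoc, this]
    · refine ⟨s j, subset_closure ⟨j, ⟨hj1, hjr⟩, rfl⟩, ?_⟩
      simp [mul_assoc, (h.commute_d hji (by omega)).eq]

end Representation

end TypeB

theorem typeB_conjugate_intersection_young_general
    (r : ℕ)
    (M : CoxeterMatrix (Fin r))
    (hM : ∀ i j : Fin r, M i j =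
      if i = j then 1
      else if ((i : ℕ) = 0 ∧ (j : ℕ) = 1) ∨ ((j : ℕ) = 0 ∧ (i : ℕ) = 1) then 4
      else if (i : ℕ) + 1 = (j : ℕ) ∨ (j : ℕ) + 1 = (i : ℕ) then 3 else 2)
    (W : Type) [Group W] (cs : CoxeterSystem M W)
    (s : ℕ → W) (hs : ∀ (i : ℕ) (h : i < r), s i = cs.simple ⟨i, h⟩)
    (Sr : Subgroup W)
    (hSr : Sr = Subgroup.closure {w | ∃ i : ℕ, 1 ≤ i ∧ i ≤ r - 1 ∧ w = s i})
    (tau : ℕ → W) (htau : ∀ j, tau j = ((List.range j).reverse.map s).prod)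
    (d : ℕ → W) (hd : ∀ i, d i = ((List.range i).map (fun t => tau (t + 1))).prod) :
    (∀ i : ℕ, 1 ≤ i → i ≤ r →
      (Subgroup.map (MulAut.conj (d i)⁻¹).toMonoidHom Sr) ⊓ Sr =
        Subgroup.closure {w | ∃ j : ℕ, 1 ≤ j ∧ j ≤ r - 1 ∧ j ≠ i ∧ w = s j}) ∧
    (Subgroup.map (MulAut.conj (d 0)⁻¹).toMonoidHom Sr) ⊓ Sr = Sr := by
  have hM' : ∀ i j : Fin r, M i j = TypeB.entry i j := fun i j => by
    simp only [hM, TypeB.entry, Fin.ext_iff]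
  have hrel := TypeB.relations_of_coxeterSystem hM' cs hs
  let φ := cs.lift ⟨_, (TypeB.relations_signedPerm r).isLiftable hM'⟩
  have hφ : ∀ j < r, φ (s j) = TypeB.signedPerm j := fun j hj => by
    rw [hs j hj]; exact cs.lift_apply_simple _ _
  obtain rfl : tau = TypeB.ladder s 0 :=
    funext fun j => (htau j).trans (TypeB.ladder_zero_eq_prod s j).symm
  obtain rfl : d = TypeB.d s := funext fun i => (hd i).trans (TypeB.d_eq_prod s i).symm
  obtain rfl : Sr = closure (s '' Icc 1 (r - 1)) := by
    rw [hSr]; congr 1; ext; simp [eq_comm, and_assoc]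
  have hY (i : ℕ) :
      {w | ∃ j : ℕ, 1 ≤ j ∧ j ≤ r - 1 ∧ j ≠ i ∧ w = s j} = s '' (Icc 1 (r - 1) \ {i}) := by
    ext; simp [eq_comm, and_assoc]
  refine ⟨fun i hi hir => by rw [hY, hrel.map_conj_d_inf_eq hφ hi hir], ?_⟩
  simp [TypeB.d]

/-- In the type `B` Weyl group `W = S_{2,r}`, for `1 ≤ i ≤ r` one has
`d_i⁻¹ S_r d_i ∩ S_r = S_{{1,…,i}} × S_{{i+1,…,r}}`, the Young subgroup generated by
`{s_1,…,s_{i−1}, s_{i+1},…,s_{r−1}}`, and `d_0⁻¹ S_r d_0 ∩ S_r = S_r`. -/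
theorem typeB_conjugate_intersection_young
    (r : ℕ) (hr : 1 ≤ r)
    (M : CoxeterMatrix (Fin r))
    (hM : ∀ i j : Fin r, M i j =
      if i = j then 1
      else if ((i : ℕ) = 0 ∧ (j : ℕ) = 1) ∨ ((j : ℕ) = 0 ∧ (i : ℕ) = 1) then 4
      else if (i : ℕ) + 1 = (j : ℕ) ∨ (j : ℕ) + 1 = (i : ℕ) then 3 else 2)
    (W : Type) [Group W] (cs : CoxeterSystem M W)
    (s : ℕ → W) (hs : ∀ (i : ℕ) (h : i < r), s i = cs.simple ⟨i, h⟩)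
    (Sr : Subgroup W)
    (hSr : Sr = Subgroup.closure {w | ∃ i : ℕ, 1 ≤ i ∧ i ≤ r - 1 ∧ w = s i})
    (tau : ℕ → W) (htau : ∀ j, tau j = ((List.range j).reverse.map s).prod)
    (d : ℕ → W) (hd : ∀ i, d i = ((List.range i).map (fun t => tau (t + 1))).prod) :
    (∀ i : ℕ, 1 ≤ i → i ≤ r →
      (Subgroup.map (MulAut.conj (d i)⁻¹).toMonoidHom Sr) ⊓ Sr =
        Subgroup.closure {w | ∃ j : ℕ, 1 ≤ j ∧ j ≤ r - 1 ∧ j ≠ i ∧ w = s j}) ∧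
    (Subgroup.map (MulAut.conj (d 0)⁻¹).toMonoidHom Sr) ⊓ Sr = Sr :=
  typeB_conjugate_intersection_young_general r M hM W cs s hs Sr hSr tau htau d hd
end
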